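/- arXiv:1709.09957 — 5 statements merged into one kernel-verified Lean document; each statement's English description precedes it below -/
import Mathlib

section
/- The tetrahedral cone has no translational symmetries: if e ∈ ℝ³ satisfies {x + e : x ∈ T} = T, then e = 0. Consequently T cannot be written as q(C₀′ × ℝ) for any q ∈ SO(3) and any 1-dimensional cone C₀′ ⊂ ℝ² (condition (B) in the definition of a polyhedral cone). -/
/-!
STATEMENT 3: The tetrahedral cone has no translational symmetries: if `e ∈ ℝ³` satisfies
`{x + e : x ∈ T} = T` then `e = 0`.  Consequently `T` cannot be written as `q(C₀′ × ℝ)` for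
any `q ∈ SO(3)` and any 1-dimensional cone `C₀′ ⊂ ℝ²`.
-/

noncomputable section

open Real
open scoped RealInnerProductSpace

/-- Euclidean 3-space. -/
abbrev E3 : Type := EuclideanSpace ℝ (Fin 3)

/-- Euclidean 2-space. -/
abbrev E2 : Type := EuclideanSpace ℝ (Fin 2)

/-- The four vertices of the tetrahedral net. -/
def tp : Fin 4 → E3
  | 0 => (EuclideanSpace.equiv (Fin 3) ℝ).symm ![1, 0, 0]
  | 1 => (EuclideanSpace.equiv (Fin 3) ℝ).symm ![-1/3, 2 * Real.sqrt 2 / 3, 0]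
  | 2 => (EuclideanSpace.equiv (Fin 3) ℝ).symm ![-1/3, -Real.sqrt 2 / 3, Real.sqrt 6 / 3]
  | 3 => (EuclideanSpace.equiv (Fin 3) ℝ).symm ![-1/3, -Real.sqrt 2 / 3, -Real.sqrt 6 / 3]

/-- The wedge `W(ab) = {s • p_a + t • p_b : s, t ≥ 0}`. -/
def Wdg (a b : Fin 4) : Set E3 := {x | ∃ s t : ℝ, 0 ≤ s ∧ 0 ≤ t ∧ x = s • tp a + t • tp b}

/-- The tetrahedral cone `T = ⋃_{a<b} W(ab)`. -/
def Tcone : Set E3 := ⋃ (a : Fin 4) (b : Fin 4) (_ : a < b), Wdg a b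

/-- The standard identification `ℝ² × ℝ ≅ ℝ³`. -/
def prodToE3 (v : E2 × ℝ) : E3 :=
  (EuclideanSpace.equiv (Fin 3) ℝ).symm ![v.1 0, v.1 1, v.2]

/-- Any vanishing linear combination of the four vertices has all coefficients equal. -/
lemma tp_key {c1 c2 c3 c4 : ℝ} (h : c1 • tp 0 + c2 • tp 1 + c3 • tp 2 + c4 • tp 3 = 0) :
    c1 = c2 ∧ c2 = c3 ∧ c3 = c4 := by
  have h0 := congrArg (fun v : E3 => v 0) h
  have h1 := congrArg (fun v : E3 => v 1) h
  have h2 := congrArg (fun v : E3 => v 2) h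
  simp [tp, EuclideanSpace.equiv] at h0 h1 h2
  have s2 : (0:ℝ) < Real.sqrt 2 := by positivity
  have s6 : (0:ℝ) < Real.sqrt 6 := by positivity
  have e34 : c3 = c4 := by
    have hz : (c3 - c4) * (Real.sqrt 6 / 3) = 0 := by linarith
    rcases mul_eq_zero.1 hz with h | h
    · linarith
    · nlinarith
  have e2 : c2 = c3 := by
    have hz : (2*c2 - c3 - c4) * (Real.sqrt 2 / 3) = 0 := by linarith
    rcases mul_eq_zero.1 hz with h | h
    · linarith
    · nlinarith
  exact ⟨by linarith, e2, e34⟩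

/-- Sum version of `tp_key`. -/
lemma tp_keySum {f : Fin 4 → ℝ} (h : ∑ i, f i • tp i = 0) : ∀ i j, f i = f j := by
  rw [Fin.sum_univ_four] at h
  obtain ⟨h1, h2, h3⟩ := tp_key h
  intro i j
  fin_cases i <;> fin_cases j
  exacts [rfl, h1, h1.trans h2, (h1.trans h2).trans h3,
    h1.symm, rfl, h2, h2.trans h3,
    (h1.trans h2).symm, h2.symm, rfl, h3,
    ((h1.trans h2).trans h3).symm, (h2.trans h3).symm, h3.symm, rfl]

lemma sum_pair (a b : Fin 4) (s t : ℝ) :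
    ∑ i : Fin 4, ((if i = a then s else 0) + (if i = b then t else 0)) • tp i
      = s • tp a + t • tp b := by
  simp [add_smul, ite_smul, Finset.sum_add_distrib, Finset.sum_ite_eq']

lemma sum_triple (a b c : Fin 4) (s t u : ℝ) :
    ∑ i : Fin 4, ((if i = a then s else 0) + (if i = b then t else 0)
        + (if i = c then u else 0)) • tp i
      = s • tp a + t • tp b + u • tp c := by
  simp [add_smul, ite_smul, Finset.sum_add_distrib, Finset.sum_ite_eq']

lemma exists_spare3 : ∀ a b j : Fin 4, ∃ k, k ≠ a ∧ k ≠ b ∧ k ≠ j := by decide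

lemma cover4 : ∀ a b a' b' : Fin 4, a < b → a' < b' →
    (∃ k : Fin 4, k ≠ a ∧ k ≠ b ∧ k ≠ a' ∧ k ≠ b') ∨
    (a' ≠ a ∧ a' ≠ b ∧ b' ≠ a ∧ b' ≠ b) := by decide

lemma mem_Tcone {x : E3} :
    x ∈ Tcone ↔ ∃ a b : Fin 4, a < b ∧ ∃ s t : ℝ, 0 ≤ s ∧ 0 ≤ t ∧
      x = s • tp a + t • tp b := by
  simp [Tcone, Wdg, Set.mem_iUnion, Set.mem_setOf_eq]

/-- No positive multiple of `-p_j` lies in the cone. -/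
lemma neg_tp_not_mem {c : ℝ} (hc : 0 < c) (j : Fin 4) : -(c • tp j) ∉ Tcone := by
  intro hmem
  obtain ⟨a, b, hab, s, t, hs, ht, hE⟩ := mem_Tcone.1 hmem
  set f : Fin 4 → ℝ := fun i =>
    (if i = a then s else 0) + (if i = b then t else 0) + (if i = j then c else 0) with hf
  have hsum : ∑ i, f i • tp i = 0 := by
    rw [hf, sum_triple]
    linear_combination (norm := module) -hE
  obtain ⟨k, hka, hkb, hkj⟩ := exists_spare3 a b j
  have hfk : f k = 0 := by simp [hf, if_neg hka, if_neg hkb, if_neg hkj]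
  have hfj : c ≤ f j := by
    simp only [hf, if_pos rfl]
    split_ifs <;> linarith
  have := tp_keySum hsum j k
  rw [hfk] at this
  linarith

/-- The tetrahedral cone has no translational symmetries, and consequently is not the image
under a rotation `q ∈ SO(3)` of `C₀′ × ℝ` for a 1-dimensional cone `C₀′ ⊂ ℝ²`. -/
theorem tetrahedral_cone_no_translations :
    (∀ e : E3, (fun x => x + e) '' Tcone = Tcone → e = 0) ∧
    ¬ ∃ (q : E3 ≃ₗᵢ[ℝ] E3) (C₀' : Set E2),
        LinearMap.det (q.toLinearEquiv : E3 →ₗ[ℝ] E3) = 1 ∧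
        (∀ x ∈ C₀', ∀ t : ℝ, 0 ≤ t → t • x ∈ C₀') ∧
        dimH C₀' = 1 ∧
        Tcone = q '' (prodToE3 '' (C₀' ×ˢ (Set.univ : Set ℝ))) := by
  have hzero : (0 : E3) ∈ Tcone := by
    refine mem_Tcone.2 ⟨0, 1, by decide, 0, 0, le_refl _, le_refl _, by simp⟩
  have part1 : ∀ e : E3, (fun x => x + e) '' Tcone = Tcone → e = 0 := by
    intro e he
    have htrans : ∀ x ∈ Tcone, x + e ∈ Tcone := by
      intro x hx
      rw [← he]
      exact ⟨x, hx, rfl⟩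
    have heT : e ∈ Tcone := by simpa using htrans 0 hzero
    have hneT : -e ∈ Tcone := by
      have h0 : (0 : E3) ∈ (fun x => x + e) '' Tcone := he.symm ▸ hzero
      obtain ⟨x, hx, hxe⟩ := h0
      have : x = -e := by
        have : x + e = 0 := hxe
        linear_combination (norm := module) this
      rwa [this] at hx
    obtain ⟨a, b, hab, s, t, hs, ht, hE⟩ := mem_Tcone.1 heT
    obtain ⟨a', b', hab', s', t', hs', ht', hE'⟩ := mem_Tcone.1 hneT
    set f : Fin 4 → ℝ := fun i =>
      ((if i = a then s else 0) + (if i = b then t else 0))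
        + ((if i = a' then s' else 0) + (if i = b' then t' else 0)) with hf
    have hsum : ∑ i, f i • tp i = 0 := by
      rw [hf]
      simp only [add_smul, Finset.sum_add_distrib]
      have p1 := sum_pair a b s t
      have p2 := sum_pair a' b' s' t'
      simp only [add_smul, Finset.sum_add_distrib] at p1 p2
      rw [p1, p2, ← hE, ← hE']
      simp
    have hall := tp_keySum hsum
    rcases cover4 a b a' b' hab hab' with
      ⟨k, hka, hkb, hka', hkb'⟩ | ⟨h1, h2, h3, h4⟩
    · -- a spare vertex exists: all coefficients vanish
      have hfk : f k = 0 := by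
        simp [hf, if_neg hka, if_neg hkb, if_neg hka', if_neg hkb']
      have hfa : s ≤ f a := by
        simp only [hf, if_pos rfl]
        split_ifs <;> linarith
      have hfb : t ≤ f b := by
        simp only [hf, if_pos rfl]
        split_ifs <;> linarith
      have ha0 := hall a k
      have hb0 := hall b k
      rw [hfk] at ha0 hb0
      have hs0 : s = 0 := le_antisymm (by linarith) hs
      have ht0 : t = 0 := le_antisymm (by linarith) ht
      rw [hE, hs0, ht0]
      simp
    · -- the two wedges are opposite: e = -(v•(p_{a'}+p_{b'}))
      have hfa' : f a' = s' := by
        simp [hf, if_neg h1, if_neg h2, if_neg hab'.ne]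
      have hfb' : f b' = t' := by
        simp [hf, if_neg h3, if_neg h4, if_neg hab'.ne']
      have hst : s' = t' := by
        have := hall a' b'
        rw [hfa', hfb'] at this
        exact this
      rcases eq_or_lt_of_le hs' with hv0 | hv
      · -- v = 0 : e = 0
        have : -e = 0 := by
          rw [hE', ← hv0, ← hst, ← hv0]
          simp
        linear_combination (norm := module) -this
      · -- v > 0 : contradiction with neg_tp_not_mem
        exfalso
        have hx : s' • tp a' ∈ Tcone :=
          mem_Tcone.2 ⟨a', b', hab', s', 0, hs', le_refl _, by simp⟩
        have hmem := htrans _ hx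
        have hrw : s' • tp a' + e = -(s' • tp b') := by
          have he' : -e = s' • tp a' + t' • tp b' := hE'
          rw [← hst] at he'
          linear_combination (norm := module) -he'
        rw [hrw] at hmem
        exact neg_tp_not_mem hv b' hmem
  refine ⟨part1, ?_⟩
  rintro ⟨q, C, -, -, -, hT⟩
  set w : E3 := prodToE3 (0, 1) with hw
  have hadd : ∀ (c : E2) (u : ℝ), prodToE3 (c, u) + w = prodToE3 (c, u + 1) := by
    intro c u
    ext i
    fin_cases i <;> simp [prodToE3, hw, EuclideanSpace.equiv]
  have hmemT : ∀ y, y ∈ Tcone ↔ ∃ c ∈ C, ∃ u : ℝ, y = q (prodToE3 (c, u)) := by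
    intro y
    rw [hT]
    constructor
    · rintro ⟨z, ⟨v, ⟨hv, -⟩, rfl⟩, rfl⟩
      exact ⟨v.1, hv, v.2, rfl⟩
    · rintro ⟨c, hc, u, rfl⟩
      exact ⟨prodToE3 (c, u), ⟨(c, u), ⟨hc, trivial⟩, rfl⟩, rfl⟩
  have htr : (fun x => x + q w) '' Tcone = Tcone := by
    ext y
    constructor
    · rintro ⟨x, hx, rfl⟩
      obtain ⟨c, hc, u, rfl⟩ := (hmemT x).1 hx
      refine (hmemT _).2 ⟨c, hc, u + 1, ?_⟩
      show q (prodToE3 (c, u)) + q w = _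
      rw [← q.map_add, hadd]
    · intro hy
      obtain ⟨c, hc, u, rfl⟩ := (hmemT y).1 hy
      refine ⟨q (prodToE3 (c, u - 1)), (hmemT _).2 ⟨c, hc, u - 1, rfl⟩, ?_⟩
      show q (prodToE3 (c, u - 1)) + q w = _
      rw [← q.map_add, hadd]
      norm_num
  have hqw : q w = 0 := part1 _ htr
  have hw0 : w = 0 := by
    refine q.injective ?_
    rw [q.map_zero]
    exact hqw
  have := congrArg (fun v : E3 => v 2) hw0
  simp [hw, prodToE3, EuclideanSpace.equiv] at this
end
end

section
/- Rotations generate compatible Jacobi fields: for every skew-symmetric linear map A : ℝ^{3+m} → ℝ^{3+m}, the collection v(ab) := π_{(P(ab)×ℝ^m)^⊥} ∘ A restricted to (W(ab)×ℝ^m) ∩ B₁ is a linear compatible Jacobi field on C ∩ B₁ = (T × ℝ^m) ∩ B₁; in particular each v(ab) is smooth and harmonic, condition (B) holds with V(z) taken to be the ℝ³-component of Az, and condition (C) holds. -/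
/-!
STATEMENT 6: Rotations generate compatible Jacobi fields: for every skew-symmetric linear map
`A : ℝ^{3+m} → ℝ^{3+m}`, the collection `v(ab) := π_{(P(ab)×ℝ^m)^⊥} ∘ A` restricted to
`(W(ab)×ℝ^m) ∩ B₁` is a linear compatible Jacobi field on `C ∩ B₁ = (T × ℝ^m) ∩ B₁`;
in particular each `v(ab)` is smooth and harmonic, condition (B) holds with `V(z)` taken
to be the `ℝ³`-component of `Az`, and condition (C) holds.
-/
noncomputable section

open Real MeasureTheory Metric
open scoped RealInnerProductSpace

/-- The junction ray `L(a) = {t • p_a : t ≥ 0}` in `ℝ³`. -/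
def ray (a : Fin 4) : Set E3 := {x | ∃ t : ℝ, 0 ≤ t ∧ x = t • tp a}

/-- Unit tangent at `tp a` towards `tp b`; `(tp a, tang a b)` is an orthonormal basis
of the plane `P(ab)`. -/
def tang (a b : Fin 4) : E3 := (2 * Real.sqrt 2)⁻¹ • (tp a + (3:ℝ) • tp b)

/-- The outward unit conormal of `W(ab)` along `L(a)`, `n_a(ab) = −(p_a+3p_b)/(2√2)`. -/
def conormal (a b : Fin 4) : E3 := -tang a b

/-- The ambient space `ℝ^{3+m} = ℝ³ × ℝ^m`. -/
abbrev Fm (m : ℕ) : Type := EuclideanSpace ℝ (Fin (3 + m))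

/-- The `ℝ³`-component of `X ∈ ℝ^{3+m}`. -/
def projx (m : ℕ) (X : Fm m) : E3 :=
  (EuclideanSpace.equiv (Fin 3) ℝ).symm fun i => X (Fin.castAdd m i)

/-- The embedding `ℝ³ → ℝ^{3+m}` onto the first three coordinates. -/
def embx (m : ℕ) (x : E3) : Fm m :=
  (EuclideanSpace.equiv (Fin (3 + m)) ℝ).symm
    (Fin.addCases (fun i : Fin 3 => x i) (fun _ : Fin m => (0:ℝ)))

/-- The standard basis vectors of the `ℝ^m` factor of `ℝ^{3+m}`. -/
def emby (m : ℕ) (j : Fin m) : Fm m := EuclideanSpace.single (Fin.natAdd 3 j) (1:ℝ)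

/-- The cylindrical wedge `W(ab) × ℝ^m ⊂ ℝ^{3+m}`. -/
def Wc (m : ℕ) (a b : Fin 4) : Set (Fm m) := {X | projx m X ∈ Wdg a b}

/-- The cylindrical plane `P(ab) × ℝ^m` as a subspace of `ℝ^{3+m}`. -/
def Pc (m : ℕ) (a b : Fin 4) : Submodule ℝ (Fm m) :=
  Submodule.span ℝ ({embx m (tp a), embx m (tp b)} ∪ Set.range (emby m))

/-- The domain `(W(ab) × ℝ^m) ∩ B₁` of the component `v(ab)` of a Jacobi field. -/
def domW (m : ℕ) (a b : Fin 4) : Set (Fm m) := Wc m a b ∩ ball (0 : Fm m) 1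

/-- `((W(ab) ∖ {0}) × ℝ^m) ∩ B₁`, the domain away from the spine `{0} × ℝ^m`. -/
def domWStar (m : ℕ) (a b : Fin 4) : Set (Fm m) := {X ∈ domW m a b | projx m X ≠ 0}

/-- `((L(a) ∖ {0}) × ℝ^m) ∩ B₁`, the junction edge of the cylinder. -/
def domL (m : ℕ) (a : Fin 4) : Set (Fm m) :=
  {X | projx m X ∈ ray a ∧ projx m X ≠ 0} ∩ ball (0 : Fm m) 1

/-- The Laplacian of `f` on the cylindrical plane `P(ab) × ℝ^m`, computed (within the set
`s`) using the orthonormal basis `(tp a, tang a b, e_{3+1}, …, e_{3+m})` of that plane. -/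
def lapC (m : ℕ) (a b : Fin 4) (f : Fm m → Fm m) (s : Set (Fm m)) (X : Fm m) : Fm m :=
  lineDerivWithin ℝ (fun Y => lineDerivWithin ℝ f s Y (embx m (tp a))) s X (embx m (tp a))
  + lineDerivWithin ℝ (fun Y => lineDerivWithin ℝ f s Y (embx m (tang a b))) s X
      (embx m (tang a b))
  + ∑ j : Fin m,
      lineDerivWithin ℝ (fun Y => lineDerivWithin ℝ f s Y (emby m j)) s X (emby m j)

/-- A compatible Jacobi field on `C ∩ B₁ = (T × ℝ^m) ∩ B₁`: a collection of functions
`v(ab)`, one for each wedge (the two orders `ab`, `ba` agreeing on the wedge), valued in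
`(P(ab) × ℝ^m)^⊥`, which are (A) smooth up to the boundary and harmonic away from the
spine, (B) `C⁰`-compatible and (C) `C¹`-compatible along each junction edge. -/
def IsCompatibleJacobiC (m : ℕ) (v : Fin 4 → Fin 4 → Fm m → Fm m) : Prop :=
  (∀ a b, ∀ X ∈ domW m a b, v a b X = v b a X) ∧
  (∀ a b, a ≠ b → ∀ X ∈ domW m a b, v a b X ∈ (Pc m a b)ᗮ) ∧
  (∀ a b, a ≠ b → ContDiffOn ℝ (⊤ : ℕ∞) (v a b) (domWStar m a b)) ∧
  (∀ a b, a ≠ b → ∀ X ∈ domWStar m a b, lapC m a b (v a b) (domW m a b) X = 0) ∧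
  (∀ a : Fin 4, ∀ z ∈ domL m a, ∃ V : Fm m, ∀ b, b ≠ a →
      v a b z = (Submodule.orthogonalProjectionOnto (Pc m a b)ᗮ V : Fm m)) ∧
  (∀ a : Fin 4, ∀ z ∈ domL m a,
      ∑ b ∈ Finset.univ.erase a,
        lineDerivWithin ℝ (v a b) (domW m a b) z (embx m (conormal a b)) = 0)

/-- A linear compatible Jacobi field: a compatible Jacobi field each of whose components is
the restriction of `π_{(P(ab) × ℝ^m)^⊥} ∘ A(ab)` for a skew-symmetric `A(ab)`. -/
def IsLinearJacobiC (m : ℕ) (v : Fin 4 → Fin 4 → Fm m → Fm m) : Prop :=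
  IsCompatibleJacobiC m v ∧
  ∀ a b, a ≠ b → ∃ A : Fm m →ₗ[ℝ] Fm m, (∀ x y : Fm m, ⟪A x, y⟫ = -⟪x, A y⟫) ∧
    ∀ X ∈ domW m a b, v a b X = (Submodule.orthogonalProjectionOnto (Pc m a b)ᗮ (A X) : Fm m)


/-! ### Auxiliary machinery -/

open scoped Matrix

section Aux

lemma inner_tp (a b : Fin 4) : ⟪tp a, tp b⟫ = if a = b then 1 else -(1/3) := by
  fin_cases a <;> fin_cases b <;>
    simp [tp, PiLp.inner_apply, RCLike.inner_apply, conj_trivial, Fin.sum_univ_three, -inner_self_eq_norm_sq_to_K] <;>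
    norm_num <;>
    nlinarith [Real.sq_sqrt (by norm_num : (2:ℝ) ≥ 0), Real.sq_sqrt (by norm_num : (6:ℝ) ≥ 0),
      Real.sqrt_nonneg 2, Real.sqrt_nonneg 6]

lemma inner_eq_dot (x y : E3) : ⟪x, y⟫ = (x : Fin 3 → ℝ) ⬝ᵥ (y : Fin 3 → ℝ) := by
  simp [PiLp.inner_apply, RCLike.inner_apply, conj_trivial, dotProduct, mul_comm]

def nrm (a b : Fin 4) : E3 :=
  (3 / (2 * Real.sqrt 2)) • (WithLp.toLp 2 ((tp a : Fin 3 → ℝ) ⨯₃ (tp b : Fin 3 → ℝ)) : E3)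

lemma twosqrt2_sq : (2 * Real.sqrt 2) * (2 * Real.sqrt 2) = 8 := by
  have := Real.mul_self_sqrt (by norm_num : (0:ℝ) ≤ 2); nlinarith

lemma cross_triple (u v w : Fin 3 → ℝ) : u ⨯₃ (v ⨯₃ w) = (u ⬝ᵥ w) • v - (u ⬝ᵥ v) • w := by
  funext i
  fin_cases i <;> simp [crossProduct, dotProduct, Fin.sum_univ_three] <;> ring

lemma smul_cross' (c : ℝ) (u v : Fin 3 → ℝ) : (c • u) ⨯₃ v = c • (u ⨯₃ v) := by
  funext i; fin_cases i <;> simp [crossProduct] <;> ring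
lemma add_cross' (u u' v : Fin 3 → ℝ) : (u + u') ⨯₃ v = u ⨯₃ v + u' ⨯₃ v := by
  funext i; fin_cases i <;> simp [crossProduct] <;> ring
lemma neg_cross' (u v : Fin 3 → ℝ) : (-u) ⨯₃ v = -(u ⨯₃ v) := by
  funext i; fin_cases i <;> simp [crossProduct] <;> ring

lemma inner_tp_nrm (a b : Fin 4) : ⟪tp a, nrm a b⟫ = 0 := by
  rw [nrm, real_inner_smul_right, inner_eq_dot]; simp
lemma inner_tpb_nrm (a b : Fin 4) : ⟪tp b, nrm a b⟫ = 0 := by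
  rw [nrm, real_inner_smul_right, inner_eq_dot]; simp
lemma inner_nrm_nrm (a b : Fin 4) (hab : a ≠ b) : ⟪nrm a b, nrm a b⟫ = 1 := by
  rw [nrm, real_inner_smul_right, real_inner_smul_left, inner_eq_dot]
  rw [cross_dot_cross]
  have h1 : (tp a : Fin 3 → ℝ) ⬝ᵥ (tp a : Fin 3 → ℝ) = 1 := by
    rw [← inner_eq_dot, inner_tp]; simp
  have h2 : (tp b : Fin 3 → ℝ) ⬝ᵥ (tp b : Fin 3 → ℝ) = 1 := by
    rw [← inner_eq_dot, inner_tp]; simp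
  have h3 : (tp a : Fin 3 → ℝ) ⬝ᵥ (tp b : Fin 3 → ℝ) = -(1/3) := by
    rw [← inner_eq_dot, inner_tp]; simp [hab]
  have h4 : (tp b : Fin 3 → ℝ) ⬝ᵥ (tp a : Fin 3 → ℝ) = -(1/3) := by
    rw [← inner_eq_dot, inner_tp]; simp [hab.symm]
  rw [h1, h2, h3, h4]
  have h8 := twosqrt2_sq
  field_simp
  nlinarith
lemma inner_tp_tang (a b : Fin 4) (hab : a ≠ b) : ⟪tp a, tang a b⟫ = 0 := by
  rw [tang, real_inner_smul_right, inner_add_right, real_inner_smul_right, inner_tp, inner_tp]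
  simp [hab]
lemma inner_tang_tang (a b : Fin 4) (hab : a ≠ b) : ⟪tang a b, tang a b⟫ = 1 := by
  rw [tang, real_inner_smul_right, real_inner_smul_left, inner_add_left, inner_add_right,
    inner_add_right, real_inner_smul_left, real_inner_smul_left, real_inner_smul_right,
    real_inner_smul_right, inner_tp, inner_tp, inner_tp, inner_tp]
  have h8 := twosqrt2_sq
  simp [hab, hab.symm]
  field_simp
  nlinarith
lemma inner_tang_nrm (a b : Fin 4) : ⟪tang a b, nrm a b⟫ = 0 := by
  rw [tang, real_inner_smul_left, inner_add_left, real_inner_smul_left,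
    inner_tp_nrm, inner_tpb_nrm]
  simp

lemma conormal_cross (a b : Fin 4) (hab : a ≠ b) :
    ((conormal a b : Fin 3 → ℝ) ⨯₃ (nrm a b : Fin 3 → ℝ) : Fin 3 → ℝ) = -(tp a : Fin 3 → ℝ) := by
  have h1 : (tp a : Fin 3 → ℝ) ⬝ᵥ (tp a : Fin 3 → ℝ) = 1 := by
    rw [← inner_eq_dot, inner_tp]; simp
  have h2 : (tp b : Fin 3 → ℝ) ⬝ᵥ (tp b : Fin 3 → ℝ) = 1 := by
    rw [← inner_eq_dot, inner_tp]; simp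
  have h3 : (tp a : Fin 3 → ℝ) ⬝ᵥ (tp b : Fin 3 → ℝ) = -(1/3) := by
    rw [← inner_eq_dot, inner_tp]; simp [hab]
  have h4 : (tp b : Fin 3 → ℝ) ⬝ᵥ (tp a : Fin 3 → ℝ) = -(1/3) := by
    rw [← inner_eq_dot, inner_tp]; simp [hab.symm]
  have key : ((tp a : Fin 3 → ℝ) + (3:ℝ) • (tp b : Fin 3 → ℝ)) ⨯₃ ((tp a : Fin 3 → ℝ) ⨯₃ (tp b : Fin 3 → ℝ))
      = (8/3 : ℝ) • (tp a : Fin 3 → ℝ) := by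
    rw [add_cross', smul_cross', cross_triple, cross_triple, h1, h2, h3, h4]
    module
  have hco : (conormal a b : Fin 3 → ℝ)
      = -((2 * Real.sqrt 2)⁻¹ • ((tp a : Fin 3 → ℝ) + (3:ℝ) • (tp b : Fin 3 → ℝ))) := rfl
  have hnr : (nrm a b : Fin 3 → ℝ)
      = (3 / (2 * Real.sqrt 2)) • ((tp a : Fin 3 → ℝ) ⨯₃ (tp b : Fin 3 → ℝ)) := rfl
  rw [hco, hnr, neg_cross', smul_cross']
  have : ((tp a : Fin 3 → ℝ) + (3:ℝ) • (tp b : Fin 3 → ℝ)) ⨯₃ ((3 / (2 * Real.sqrt 2)) • ((tp a : Fin 3 → ℝ) ⨯₃ (tp b : Fin 3 → ℝ)))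
      = (3 / (2 * Real.sqrt 2)) • ((8/3 : ℝ) • (tp a : Fin 3 → ℝ)) := by
    rw [← key]
    funext i; fin_cases i <;> simp [crossProduct] <;> ring
  rw [this]
  have h8 := twosqrt2_sq
  have hne : (2 * Real.sqrt 2) ≠ 0 := by positivity
  funext i
  simp only [Pi.neg_apply, Pi.smul_apply, smul_eq_mul]
  field_simp
  linear_combination (4 * tp a i) * Real.sq_sqrt (by norm_num : (0:ℝ) ≤ 2)

def ev3 (i : Fin 3) : E3 →ₗ[ℝ] ℝ where
  toFun x := x i
  map_add' _ _ := rfl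
  map_smul' _ _ := rfl
lemma sum_applyE3 {γ : Type*} (s : Finset γ) (g : γ → E3) (i : Fin 3) :
    (∑ c ∈ s, g c) i = ∑ c ∈ s, g c i := map_sum (ev3 i) g s

def nrmL (a : Fin 4) : E3 →ₗ[ℝ] E3 where
  toFun y := (3 / (2 * Real.sqrt 2)) • (WithLp.toLp 2 ((tp a : Fin 3 → ℝ) ⨯₃ (y : Fin 3 → ℝ)) : E3)
  map_add' u v := by
    ext i
    simp only [PiLp.smul_apply, PiLp.add_apply, smul_eq_mul, crossProduct, LinearMap.mk₂_apply]
    fin_cases i <;> simp <;> ring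
  map_smul' c u := by
    ext i
    simp only [PiLp.smul_apply, smul_eq_mul, crossProduct, LinearMap.mk₂_apply, RingHom.id_apply]
    fin_cases i <;> simp <;> ring

lemma sum_tp : ∑ b : Fin 4, tp b = 0 := by
  ext i
  rw [sum_applyE3, Fin.sum_univ_four]
  fin_cases i <;> simp [tp] <;> ring

lemma sum_tp_erase (a : Fin 4) : ∑ b ∈ Finset.univ.erase a, tp b = -tp a := by
  have h := Finset.add_sum_erase Finset.univ tp (Finset.mem_univ a)
  rw [sum_tp] at h
  exact eq_neg_of_add_eq_zero_right h

lemma sum_nrm (a : Fin 4) : ∑ b ∈ Finset.univ.erase a, nrm a b = 0 := by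
  have h : ∀ b, nrm a b = nrmL a (tp b) := fun _ => rfl
  simp_rw [h]
  rw [← map_sum, sum_tp_erase, map_neg]
  have : nrmL a (tp a) = 0 := by
    ext i
    simp [nrmL, cross_self]
  rw [this, neg_zero]

/-- The three vectors `tp a, tang a b, nrm a b` form an orthonormal basis of `E3`;
any vector orthogonal to the first two is a multiple of the third. -/
lemma perp_eq (a b : Fin 4) (hab : a ≠ b) (x : E3)
    (h1 : ⟪tp a, x⟫ = 0) (h2 : ⟪tp b, x⟫ = 0) : x = ⟪nrm a b, x⟫ • nrm a b := by
  have c2 : (2 * Real.sqrt 2) ≠ 0 := by positivity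
  have ht : ⟪tang a b, x⟫ = 0 := by
    rw [tang, real_inner_smul_left, inner_add_left, real_inner_smul_left, h1, h2]; ring
  have o1 : ⟪tp a, tp a⟫ = 1 := by rw [inner_tp]; simp
  have o2 := inner_tang_tang a b hab
  have o3 := inner_nrm_nrm a b hab
  have o4 := inner_tp_tang a b hab
  have o4' : ⟪tang a b, tp a⟫ = 0 := by rw [real_inner_comm]; exact o4
  have o5 := inner_tp_nrm a b
  have o5' : ⟪nrm a b, tp a⟫ = 0 := by rw [real_inner_comm]; exact o5
  have o6 := inner_tang_nrm a b
  have o6' : ⟪nrm a b, tang a b⟫ = 0 := by rw [real_inner_comm]; exact o6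
  have horth : Orthonormal ℝ ![tp a, tang a b, nrm a b] := by
    rw [orthonormal_iff_ite]
    intro i j
    fin_cases i <;> fin_cases j <;>
      simp [o1, o2, o3, o4, o4', o5, o5', o6, o6', -inner_self_eq_norm_sq_to_K]
  have hsp : Submodule.span ℝ (Set.range ![tp a, tang a b, nrm a b]) = ⊤ :=
    horth.linearIndependent.span_eq_top_of_card_eq_finrank
      (by simp [finrank_euclideanSpace_fin])
  set y := x - ⟪nrm a b, x⟫ • nrm a b with hy
  have hx1 : ⟪tp a, y⟫ = 0 := by
    rw [hy, inner_sub_right, real_inner_smul_right, h1, o5]; ring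
  have hx2 : ⟪tang a b, y⟫ = 0 := by
    rw [hy, inner_sub_right, real_inner_smul_right, ht, o6]; ring
  have hx3 : ⟪nrm a b, y⟫ = 0 := by
    rw [hy, inner_sub_right, real_inner_smul_right, o3]; ring
  have hyi : ∀ w : E3, ⟪w, y⟫ = 0 := by
    intro w
    have hw : w ∈ Submodule.span ℝ (Set.range ![tp a, tang a b, nrm a b]) := by
      rw [hsp]; trivial
    induction hw using Submodule.span_induction with
    | mem w hwmem =>
        obtain ⟨i, rfl⟩ := hwmem
        fin_cases i
        · simpa using hx1
        · simpa using hx2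
        · simpa using hx3
    | zero => exact inner_zero_left _
    | add u w humem hwmem hu hw => rw [inner_add_left, hu, hw]; ring
    | smul c u humem hu => rw [real_inner_smul_left, hu]; ring
  have hy0 : y = 0 := by
    have := hyi y
    rwa [inner_self_eq_zero] at this
  exact sub_eq_zero.mp hy0

variable {m : ℕ}

lemma embx_castAdd (x : E3) (i : Fin 3) : embx m x (Fin.castAdd m i) = x i := by
  simp [embx]
lemma embx_natAdd (x : E3) (j : Fin m) : embx m x (Fin.natAdd 3 j) = 0 := by
  simp [embx]
lemma projx_apply (X : Fm m) (i : Fin 3) : projx m X i = X (Fin.castAdd m i) := rfl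
lemma projx_embx (x : E3) : projx m (embx m x) = x := by
  ext i; simp [projx_apply, embx_castAdd]
lemma projx_add (X Y : Fm m) : projx m (X + Y) = projx m X + projx m Y := rfl
lemma projx_smul (c : ℝ) (X : Fm m) : projx m (c • X) = c • projx m X := rfl
lemma embx_add (x y : E3) : embx m (x + y) = embx m x + embx m y := by
  ext i
  induction i using Fin.addCases with
  | left i => rw [PiLp.add_apply, embx_castAdd, embx_castAdd, embx_castAdd]; rfl
  | right j => rw [PiLp.add_apply, embx_natAdd, embx_natAdd, embx_natAdd]; ring
lemma embx_smul (c : ℝ) (x : E3) : embx m (c • x) = c • embx m x := by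
  ext i
  induction i using Fin.addCases with
  | left i => rw [PiLp.smul_apply, embx_castAdd, embx_castAdd]; rfl
  | right j => rw [PiLp.smul_apply, embx_natAdd, embx_natAdd]; simp
lemma projx_emby (j : Fin m) : projx m (emby m j) = 0 := by
  ext i
  rw [projx_apply]
  have : (Fin.natAdd 3 j : Fin (3+m)) ≠ Fin.castAdd m i := by
    intro h
    have := congrArg Fin.val h
    simp at this; omega
  simp [emby, EuclideanSpace.single_apply, this.symm]
lemma inner_embx_left (x : E3) (W : Fm m) : ⟪embx m x, W⟫ = ⟪x, projx m W⟫ := by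
  simp only [PiLp.inner_apply, RCLike.inner_apply, conj_trivial]
  rw [Fin.sum_univ_add (f := fun i : Fin (3+m) => W i * embx m x i)]
  simp [embx_castAdd, embx_natAdd, projx_apply]
lemma inner_embx (x y : E3) : ⟪embx m x, embx m y⟫ = ⟪x, y⟫ := by
  rw [inner_embx_left, projx_embx]
lemma inner_emby_left (j : Fin m) (W : Fm m) : ⟪emby m j, W⟫ = W (Fin.natAdd 3 j) := by
  simp [emby, EuclideanSpace.inner_single_left]

def embxL (m : ℕ) : E3 →ₗ[ℝ] Fm m where
  toFun := embx m
  map_add' := embx_add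
  map_smul' := embx_smul

/-- The orthogonal complement of the cylindrical plane is spanned by the unit normal. -/
lemma Pc_orth (a b : Fin 4) (hab : a ≠ b) :
    (Pc m a b)ᗮ = ℝ ∙ (embx m (nrm a b)) := by
  apply le_antisymm
  · intro w hw
    rw [Submodule.mem_orthogonal] at hw
    have hgen : ∀ u ∈ ({embx m (tp a), embx m (tp b)} ∪ Set.range (emby m) : Set (Fm m)),
        ⟪u, w⟫ = 0 := fun u hu => hw u (Submodule.subset_span hu)
    have h1 : ⟪tp a, projx m w⟫ = 0 := by
      rw [← inner_embx_left]
      exact hgen _ (Set.mem_union_left _ (Set.mem_insert _ _))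
    have h2 : ⟪tp b, projx m w⟫ = 0 := by
      rw [← inner_embx_left]
      exact hgen _ (Set.mem_union_left _ (Set.mem_insert_of_mem _ rfl))
    have hj : ∀ j : Fin m, w (Fin.natAdd 3 j) = 0 := fun j => by
      rw [← inner_emby_left j w]
      exact hgen _ (Set.mem_union_right _ ⟨j, rfl⟩)
    have hx := perp_eq a b hab (projx m w) h1 h2
    have hw_eq : w = embx m (projx m w) := by
      ext i
      induction i using Fin.addCases with
      | left i => rw [embx_castAdd, projx_apply]
      | right j => rw [embx_natAdd, hj]
    rw [Submodule.mem_span_singleton]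
    refine ⟨⟪nrm a b, projx m w⟫, ?_⟩
    calc (⟪nrm a b, projx m w⟫ : ℝ) • embx m (nrm a b)
        = embx m (⟪nrm a b, projx m w⟫ • nrm a b) := (embx_smul _ _).symm
      _ = embx m (projx m w) := by rw [← hx]
      _ = w := hw_eq.symm
  · rw [Submodule.span_singleton_le_iff_mem, Submodule.mem_orthogonal]
    intro u hu
    induction hu using Submodule.span_induction with
    | mem u humem =>
        rcases humem with h | ⟨j, rfl⟩
        · simp only [Set.mem_insert_iff, Set.mem_singleton_iff] at h
          rcases h with rfl | rfl
          · rw [inner_embx, inner_tp_nrm]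
          · rw [inner_embx, inner_tpb_nrm]
        · rw [inner_emby_left (m := m) j, embx_natAdd]
    | zero => exact inner_zero_left _
    | add u w humem hwmem hu hw => rw [inner_add_left, hu, hw]; ring
    | smul c u humem hu => rw [real_inner_smul_left, hu]; ring

lemma norm_nu (a b : Fin 4) (hab : a ≠ b) : ‖embx m (nrm a b)‖ = 1 := by
  have h : ⟪embx m (nrm a b), embx m (nrm a b)⟫ = 1 := by
    rw [inner_embx, inner_nrm_nrm a b hab]
  have := real_inner_self_eq_norm_sq (embx m (nrm a b))
  nlinarith [norm_nonneg (embx m (nrm a b))]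

/-- Closed formula for the projection onto the orthocomplement of the cylindrical plane. -/
lemma proj_formula (a b : Fin 4) (hab : a ≠ b) (X : Fm m) :
    (Submodule.orthogonalProjectionOnto (Pc m a b)ᗮ X : Fm m)
      = ⟪embx m (nrm a b), X⟫ • embx m (nrm a b) := by
  have hnu : ⟪embx m (nrm a b), embx m (nrm a b)⟫ = 1 := by
    rw [inner_embx, inner_nrm_nrm a b hab]
  rw [← Submodule.starProjection_apply]
  apply Submodule.eq_starProjection_of_mem_orthogonal
  · rw [Pc_orth a b hab]
    exact Submodule.smul_mem _ _ (Submodule.mem_span_singleton_self _)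
  · have horth : ((Pc m a b)ᗮ)ᗮ = (ℝ ∙ (embx m (nrm a b)))ᗮ := by rw [Pc_orth a b hab]
    rw [horth, Submodule.mem_orthogonal_singleton_iff_inner_right, inner_sub_right,
      real_inner_smul_right, hnu]
    ring

/-! ### Derivative lemmas -/

section Deriv
variable {E F : Type*} [NormedAddCommGroup E] [NormedSpace ℝ E]
  [NormedAddCommGroup F] [NormedSpace ℝ F]

lemma preimage_convex {s : Set E} (hs : Convex ℝ s) (X d : E) :
    Convex ℝ ((fun t : ℝ => X + t • d) ⁻¹' s) := by
  intro t1 h1 t2 h2 α β hα hβ hαβ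
  have hX : α • X + β • X = X := by rw [← add_smul, hαβ, one_smul]
  have key : X + (α • t1 + β • t2) • d = α • (X + t1 • d) + β • (X + t2 • d) := by
    have h2' : α • (X + t1 • d) + β • (X + t2 • d)
        = (α • X + β • X) + (α * t1 + β * t2) • d := by module
    rw [h2', hX]; norm_num
  show X + (α • t1 + β • t2) • d ∈ s
  rw [key]
  exact hs h1 h2 hα hβ hαβ

lemma unique_diff_line {s : Set E} (hs : Convex ℝ s) {X d : E} (hX : X ∈ s) {t₀ : ℝ}
    (ht0 : t₀ ≠ 0) (hmem : X + t₀ • d ∈ s) :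
    UniqueDiffWithinAt ℝ ((fun t : ℝ => X + t • d) ⁻¹' s) 0 := by
  set p := (fun t : ℝ => X + t • d) ⁻¹' s with hp_def
  have hp : Convex ℝ p := preimage_convex hs X d
  have h0 : (0:ℝ) ∈ p := by simp [hp_def, hX]
  have ht : t₀ ∈ p := hmem
  refine uniqueDiffWithinAt_convex hp ?_ (subset_closure h0)
  have hseg : segment ℝ 0 t₀ ⊆ p := hp.segment_subset h0 ht
  rcases lt_or_gt_of_ne ht0 with h | h
  · have hsub : Set.Ioo t₀ 0 ⊆ p := fun x hx => hseg (by
      rw [segment_symm, segment_eq_Icc h.le]; exact Set.Ioo_subset_Icc_self hx)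
    exact ⟨t₀/2, interior_maximal hsub isOpen_Ioo ⟨by linarith, by linarith⟩⟩
  · have hsub : Set.Ioo 0 t₀ ⊆ p := fun x hx => hseg (by
      rw [segment_eq_Icc h.le]; exact Set.Ioo_subset_Icc_self hx)
    exact ⟨t₀/2, interior_maximal hsub isOpen_Ioo ⟨by linarith, by linarith⟩⟩

lemma clm_lineDerivWithin (T : E →L[ℝ] F) {s : Set E} (hs : Convex ℝ s) {X d : E}
    (hX : X ∈ s) {t₀ : ℝ} (ht0 : t₀ ≠ 0) (hmem : X + t₀ • d ∈ s) :
    lineDerivWithin ℝ (⇑T) s X d = T d := by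
  have h1 : HasLineDerivWithinAt ℝ (⇑T) (T d) s X d :=
    ((T.hasFDerivAt).hasLineDerivAt d).hasLineDerivWithinAt s
  exact HasDerivWithinAt.derivWithin h1 (unique_diff_line hs hX ht0 hmem)

lemma clm_lineDerivWithin2 (T : E →L[ℝ] F) {s : Set E} (hs : Convex ℝ s) {X d : E}
    (hX : X ∈ s) {ε : ℝ} (hε : 0 < ε)
    (hstab : ∀ t : ℝ, 0 ≤ t → t < ε → X + t • d ∈ s) :
    lineDerivWithin ℝ (fun Y => lineDerivWithin ℝ (⇑T) s Y d) s X d = 0 := by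
  have hmemhalf : X + (ε/2) • d ∈ s := hstab _ (by linarith) (by linarith)
  have key : ∀ t : ℝ, t ∈ ((fun t : ℝ => X + t • d) ⁻¹' s) →
      lineDerivWithin ℝ (⇑T) s (X + t • d) d = T d := by
    intro t ht
    rcases ne_or_eq t (ε/2) with h | h
    · refine clm_lineDerivWithin T hs ht (t₀ := ε/2 - t) (sub_ne_zero.mpr (Ne.symm h)) ?_
      rw [add_assoc, ← add_smul]
      have hh : t + (ε/2 - t) = ε/2 := by ring
      rw [hh]
      exact hmemhalf
    · refine clm_lineDerivWithin T hs ht (t₀ := -(ε/2)) (by simp; linarith) ?_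
      rw [add_assoc, ← add_smul, h]
      have hh : ε/2 + -(ε/2) = 0 := by ring
      rw [hh, zero_smul, add_zero]
      exact hX
  have h0 : (0:ℝ) ∈ (fun t : ℝ => X + t • d) ⁻¹' s := by simp [hX]
  have hu : UniqueDiffWithinAt ℝ ((fun t : ℝ => X + t • d) ⁻¹' s) 0 :=
    unique_diff_line hs hX (t₀ := ε/2) (by positivity) hmemhalf
  have hconst : HasDerivWithinAt
      (fun t : ℝ => lineDerivWithin ℝ (⇑T) s (X + t • d) d) 0
      ((fun t : ℝ => X + t • d) ⁻¹' s) 0 :=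
    (hasDerivWithinAt_const _ _ (T d)).congr key (key 0 h0)
  exact hconst.derivWithin hu

end Deriv

/-! ### Geometry of the wedges -/

lemma Wdg_convex (a b : Fin 4) : Convex ℝ (Wdg a b) := by
  rintro x ⟨s1, t1, hs1, ht1, rfl⟩ y ⟨s2, t2, hs2, ht2, rfl⟩ α β hα hβ hαβ
  refine ⟨α * s1 + β * s2, α * t1 + β * t2, by positivity, by positivity, ?_⟩
  module

def projxL (m : ℕ) : Fm m →ₗ[ℝ] E3 where
  toFun := projx m
  map_add' := projx_add
  map_smul' := projx_smul

lemma domW_convex (m : ℕ) (a b : Fin 4) : Convex ℝ (domW m a b) :=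
  Convex.inter ((Wdg_convex a b).linear_preimage (projxL m)) (convex_ball 0 1)

lemma projx_line (X D : Fm m) (t : ℝ) :
    projx m (X + t • D) = projx m X + t • projx m D := by
  rw [projx_add, projx_smul]

lemma stab {a b : Fin 4} {X : Fm m} (hX : X ∈ domW m a b) (D : Fm m)
    (hD : ∀ t : ℝ, 0 ≤ t → projx m (X + t • D) ∈ Wdg a b) :
    ∃ ε > 0, ∀ t : ℝ, 0 ≤ t → t < ε → X + t • D ∈ domW m a b := by
  have hball : ‖X‖ < 1 := by
    have := hX.2; rwa [mem_ball_zero_iff] at this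
  refine ⟨(1 - ‖X‖) / (‖D‖ + 1), div_pos (by linarith) (by positivity),
    fun t ht0 htε => ⟨hD t ht0, ?_⟩⟩
  rw [mem_ball_zero_iff]
  have h1 : ‖X + t • D‖ ≤ ‖X‖ + t * ‖D‖ := by
    calc ‖X + t • D‖ ≤ ‖X‖ + ‖t • D‖ := norm_add_le _ _
      _ = ‖X‖ + t * ‖D‖ := by rw [norm_smul, Real.norm_of_nonneg ht0]
  have hD0 : (0:ℝ) ≤ ‖D‖ := norm_nonneg _
  have h2 : t * (‖D‖ + 1) < 1 - ‖X‖ := (lt_div_iff₀ (by positivity)).mp htε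
  nlinarith

lemma wedge_add_a {a b : Fin 4} {x : E3} (hx : x ∈ Wdg a b) {t : ℝ} (ht : 0 ≤ t) :
    x + t • tp a ∈ Wdg a b := by
  obtain ⟨s, u, hs, hu, rfl⟩ := hx
  exact ⟨s + t, u, by linarith, hu, by module⟩

lemma wedge_add_tang {a b : Fin 4} {x : E3} (hx : x ∈ Wdg a b) {t : ℝ} (ht : 0 ≤ t) :
    x + t • tang a b ∈ Wdg a b := by
  obtain ⟨s, u, hs, hu, rfl⟩ := hx
  have hc : (0:ℝ) ≤ (2 * Real.sqrt 2)⁻¹ := by positivity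
  refine ⟨s + t * (2 * Real.sqrt 2)⁻¹, u + 3 * (t * (2 * Real.sqrt 2)⁻¹), by nlinarith,
    by nlinarith, ?_⟩
  rw [tang]
  module

lemma wedge_conormal {a b : Fin 4} {t₀ t : ℝ} (ht₀ : 0 ≤ t₀) (ht : t ≤ 0) :
    t₀ • tp a + t • conormal a b ∈ Wdg a b := by
  have hc : (0:ℝ) ≤ (2 * Real.sqrt 2)⁻¹ := by positivity
  refine ⟨t₀ - t * (2 * Real.sqrt 2)⁻¹, -(3 * (t * (2 * Real.sqrt 2)⁻¹)), by nlinarith,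
    by nlinarith, ?_⟩
  rw [conormal, tang]
  module

/-! ### The skew-bilinear form induced on `E3` -/

section BRep
variable (A : Fm m →ₗ[ℝ] Fm m)

def e3b : Fin 3 → E3 := fun i => EuclideanSpace.single i 1

lemma decompE3 (x : E3) : x = x 0 • e3b 0 + x 1 • e3b 1 + x 2 • e3b 2 := by
  ext i
  fin_cases i <;>
    simp [e3b, PiLp.add_apply, PiLp.smul_apply, EuclideanSpace.single_apply]

def Bf (x y : E3) : ℝ := ⟪A (embx m x), embx m y⟫

lemma Bf_skew (hskew : ∀ x y : Fm m, ⟪A x, y⟫ = -⟪x, A y⟫) (x y : E3) :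
    Bf A y x = -(Bf A x y) := by
  unfold Bf
  rw [hskew, real_inner_comm]

lemma Bf_add_left (x x' y : E3) : Bf A (x + x') y = Bf A x y + Bf A x' y := by
  unfold Bf; rw [embx_add, map_add, inner_add_left]
lemma Bf_smul_left (c : ℝ) (x y : E3) : Bf A (c • x) y = c * Bf A x y := by
  unfold Bf; rw [embx_smul, A.map_smul, real_inner_smul_left]
lemma Bf_add_right (x y y' : E3) : Bf A x (y + y') = Bf A x y + Bf A x y' := by
  unfold Bf; rw [embx_add, inner_add_right]
lemma Bf_smul_right (c : ℝ) (x y : E3) : Bf A x (c • y) = c * Bf A x y := by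
  unfold Bf; rw [embx_smul, real_inner_smul_right]

lemma Bf_rep (hskew : ∀ x y : Fm m, ⟪A x, y⟫ = -⟪x, A y⟫) (x y : E3) :
    Bf A x y = (![Bf A (e3b 1) (e3b 2), Bf A (e3b 2) (e3b 0), Bf A (e3b 0) (e3b 1)]
      : Fin 3 → ℝ) ⬝ᵥ ((x : Fin 3 → ℝ) ⨯₃ (y : Fin 3 → ℝ)) := by
  have hself : ∀ u : E3, Bf A u u = 0 := fun u => by
    have := Bf_skew A hskew u u; linarith
  have h10 : Bf A (e3b 1) (e3b 0) = -(Bf A (e3b 0) (e3b 1)) := Bf_skew A hskew _ _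
  have h20 : Bf A (e3b 2) (e3b 0) = -(Bf A (e3b 0) (e3b 2)) := Bf_skew A hskew _ _
  have h21 : Bf A (e3b 2) (e3b 1) = -(Bf A (e3b 1) (e3b 2)) := Bf_skew A hskew _ _
  conv_lhs => rw [decompE3 x, decompE3 y]
  simp only [Bf_add_left, Bf_smul_left, Bf_add_right, Bf_smul_right, hself, h10]
  rw [show Bf A (e3b 2) (e3b 0) = -(Bf A (e3b 0) (e3b 2)) from h20]
  rw [show Bf A (e3b 2) (e3b 1) = -(Bf A (e3b 1) (e3b 2)) from h21]
  simp only [dotProduct, crossProduct, LinearMap.mk₂_apply, Fin.sum_univ_three,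
    Matrix.cons_val_zero, Matrix.cons_val_one, Matrix.head_cons, Matrix.cons_val_two,
    Matrix.tail_cons]
  ring

lemma key_term (hskew : ∀ x y : Fm m, ⟪A x, y⟫ = -⟪x, A y⟫) (a b : Fin 4) (hab : a ≠ b) :
    ⟪embx m (nrm a b), A (embx m (conormal a b))⟫
      = -((![Bf A (e3b 1) (e3b 2), Bf A (e3b 2) (e3b 0), Bf A (e3b 0) (e3b 1)]
        : Fin 3 → ℝ) ⬝ᵥ (tp a : Fin 3 → ℝ)) := by
  have h : ⟪embx m (nrm a b), A (embx m (conormal a b))⟫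
      = Bf A (conormal a b) (nrm a b) := by
    unfold Bf; rw [real_inner_comm]
  rw [h, Bf_rep A hskew, conormal_cross a b hab, dotProduct_neg]

lemma sum_key (hskew : ∀ x y : Fm m, ⟪A x, y⟫ = -⟪x, A y⟫) (a : Fin 4) :
    ∑ b ∈ Finset.univ.erase a,
      ⟪embx m (nrm a b), A (embx m (conormal a b))⟫ • embx m (nrm a b) = 0 := by
  set κ : ℝ := -((![Bf A (e3b 1) (e3b 2), Bf A (e3b 2) (e3b 0), Bf A (e3b 0) (e3b 1)]
    : Fin 3 → ℝ) ⬝ᵥ (tp a : Fin 3 → ℝ)) with hκ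
  have hterm : ∀ b ∈ Finset.univ.erase a,
      ⟪embx m (nrm a b), A (embx m (conormal a b))⟫ • embx m (nrm a b)
        = κ • (embxL m) (nrm a b) := by
    intro b hb
    have hab : a ≠ b := (Finset.mem_erase.mp hb).1.symm
    rw [key_term A hskew a b hab, hκ]
    rfl
  rw [Finset.sum_congr rfl hterm, ← Finset.smul_sum, ← map_sum, sum_nrm, map_zero, smul_zero]

end BRep

lemma embx_neg (x : E3) : embx m (-x) = -(embx m x) := by
  have := embx_smul (m := m) (-1) x
  simpa using this

lemma nrm_swap (a b : Fin 4) : nrm b a = -(nrm a b) := by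
  have hc : ((tp b : Fin 3 → ℝ) ⨯₃ (tp a : Fin 3 → ℝ) : Fin 3 → ℝ)
      = -((tp a : Fin 3 → ℝ) ⨯₃ (tp b : Fin 3 → ℝ)) := (cross_anticomm _ _).symm
  ext i
  have hci : ((tp b : Fin 3 → ℝ) ⨯₃ (tp a : Fin 3 → ℝ)) i
      = -(((tp a : Fin 3 → ℝ) ⨯₃ (tp b : Fin 3 → ℝ)) i) := by rw [hc]; rfl
  have h1 : nrm b a i
      = (3/(2*Real.sqrt 2)) * ((tp b : Fin 3 → ℝ) ⨯₃ (tp a : Fin 3 → ℝ)) i := rfl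
  have h2 : (-(nrm a b)) i
      = -((3/(2*Real.sqrt 2)) * ((tp a : Fin 3 → ℝ) ⨯₃ (tp b : Fin 3 → ℝ)) i) := rfl
  rw [h1, h2, hci]
  ring

/-- The component of the rotational Jacobi field as a continuous linear map. -/
def Tclm (m : ℕ) (A : Fm m →ₗ[ℝ] Fm m) (a b : Fin 4) : Fm m →L[ℝ] Fm m :=
  ((Pc m a b)ᗮ.subtypeL.comp (Submodule.orthogonalProjectionOnto (Pc m a b)ᗮ)).comp
    (LinearMap.toContinuousLinearMap A)

lemma Tclm_apply (A : Fm m →ₗ[ℝ] Fm m) (a b : Fin 4) (X : Fm m) :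
    Tclm m A a b X = (Submodule.orthogonalProjectionOnto (Pc m a b)ᗮ (A X) : Fm m) := rfl

end Aux

/-- Rotations generate linear compatible Jacobi fields on the cylindrical tetrahedral cone. -/
theorem rotations_generate_compatible_jacobi_fields
    (m : ℕ) (A : Fm m →ₗ[ℝ] Fm m) (hskew : ∀ x y : Fm m, ⟪A x, y⟫ = -⟪x, A y⟫)
    (v : Fin 4 → Fin 4 → Fm m → Fm m)
    (hv : ∀ a b (X : Fm m), v a b X = (Submodule.orthogonalProjectionOnto (Pc m a b)ᗮ (A X) : Fm m)) :
    IsCompatibleJacobiC m v ∧ IsLinearJacobiC m v ∧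
    (∀ a : Fin 4, ∀ z ∈ domL m a, ∀ b, b ≠ a →
      v a b z = (Submodule.orthogonalProjectionOnto (Pc m a b)ᗮ (embx m (projx m (A z))) : Fm m)) := by
  have hveq : ∀ a b : Fin 4, v a b = ⇑(Tclm m A a b) := fun a b => funext fun X => by
    rw [hv, Tclm_apply]
  have hthird : ∀ a : Fin 4, ∀ z ∈ domL m a, ∀ b, b ≠ a →
      v a b z = (Submodule.orthogonalProjectionOnto (Pc m a b)ᗮ (embx m (projx m (A z))) : Fm m) := by
    intro a z _ b hb
    have hab : a ≠ b := hb.symm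
    rw [hv, proj_formula a b hab, proj_formula a b hab, inner_embx_left, inner_embx_left,
      projx_embx]
  have hcompat : IsCompatibleJacobiC m v := by
    refine ⟨?_, ?_, ?_, ?_, ?_, ?_⟩
    · -- symmetry in a,b
      intro a b X _
      rcases eq_or_ne a b with rfl | hab
      · rfl
      · rw [hv, hv, proj_formula a b hab, proj_formula b a hab.symm, nrm_swap a b,
          embx_neg, inner_neg_left, neg_smul, smul_neg, neg_neg]
    · -- valued in the orthocomplement
      intro a b _ X _
      rw [hv]
      exact SetLike.coe_mem _
    · -- smoothness
      intro a b _
      rw [hveq a b]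
      exact (Tclm m A a b).contDiff.contDiffOn
    · -- harmonicity
      intro a b _ X hX
      have hXW : X ∈ domW m a b := hX.1
      have hWc : projx m X ∈ Wdg a b := hXW.1
      have hconv := domW_convex m a b
      obtain ⟨ε1, hε1, hst1⟩ := stab hXW (embx m (tp a)) (fun t ht => by
        rw [projx_line, projx_embx]; exact wedge_add_a hWc ht)
      obtain ⟨ε2, hε2, hst2⟩ := stab hXW (embx m (tang a b)) (fun t ht => by
        rw [projx_line, projx_embx]; exact wedge_add_tang hWc ht)
      rw [hveq a b]
      unfold lapC
      rw [clm_lineDerivWithin2 _ hconv hXW hε1 hst1,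
        clm_lineDerivWithin2 _ hconv hXW hε2 hst2,
        Finset.sum_eq_zero (fun j _ => ?_)]
      · simp
      · obtain ⟨ε3, hε3, hst3⟩ := stab hXW (emby m j) (fun t ht => by
          rw [projx_line, projx_emby, smul_zero, add_zero]; exact hWc)
        exact clm_lineDerivWithin2 _ hconv hXW hε3 hst3
    · -- condition (B)
      intro a z _
      exact ⟨A z, fun b _ => hv a b z⟩
    · -- condition (C)
      intro a z hz
      obtain ⟨⟨⟨t₀, ht₀, hzray⟩, hzne⟩, hzball⟩ := hz
      have hzb : ‖z‖ < 1 := mem_ball_zero_iff.mp hzball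
      have hterm : ∀ b ∈ Finset.univ.erase a,
          lineDerivWithin ℝ (v a b) (domW m a b) z (embx m (conormal a b))
            = ⟪embx m (nrm a b), A (embx m (conormal a b))⟫ • embx m (nrm a b) := by
        intro b hb
        have hab : a ≠ b := (Finset.mem_erase.mp hb).1.symm
        have hzW : z ∈ domW m a b :=
          ⟨⟨t₀, 0, ht₀, le_refl 0, by rw [hzray, zero_smul, add_zero]⟩, hzball⟩
        set d := embx m (conormal a b) with hd
        set t₁ : ℝ := -((1 - ‖z‖) / (2 * (‖d‖ + 1))) with ht₁
        have ht₁pos : 0 < (1 - ‖z‖) / (2 * (‖d‖ + 1)) :=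
          div_pos (by linarith) (by positivity)
        have ht₁neg : t₁ < 0 := by rw [ht₁]; linarith
        have hmem : z + t₁ • d ∈ domW m a b := by
          constructor
          · show projx m (z + t₁ • d) ∈ Wdg a b
            rw [projx_line, hd, projx_embx, hzray]
            exact wedge_conormal ht₀ ht₁neg.le
          · rw [mem_ball_zero_iff]
            have h1 : ‖z + t₁ • d‖ ≤ ‖z‖ + |t₁| * ‖d‖ := by
              calc ‖z + t₁ • d‖ ≤ ‖z‖ + ‖t₁ • d‖ := norm_add_le _ _
                _ = ‖z‖ + |t₁| * ‖d‖ := by rw [norm_smul, Real.norm_eq_abs]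
            have h2 : |t₁| = (1 - ‖z‖) / (2 * (‖d‖ + 1)) := by
              rw [ht₁, abs_neg, abs_of_pos ht₁pos]
            have hD0 : (0:ℝ) ≤ ‖d‖ := norm_nonneg _
            have h3 : (1 - ‖z‖) / (2 * (‖d‖ + 1)) * ‖d‖ < 1 - ‖z‖ := by
              rw [div_mul_eq_mul_div, div_lt_iff₀ (by positivity)]
              nlinarith
            rw [h2] at h1
            linarith
        rw [hveq a b,
          clm_lineDerivWithin _ (domW_convex m a b) hzW (ne_of_lt ht₁neg) hmem,
          Tclm_apply, proj_formula a b hab]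
      rw [Finset.sum_congr rfl hterm, sum_key A hskew a]
  exact ⟨hcompat, ⟨hcompat, fun a b _ => ⟨A, hskew, fun X _ => hv a b X⟩⟩, hthird⟩
end
end

section
/- Integrability of the tetrahedral cone: every linear compatible Jacobi field on T is generated by a single rotation. Precisely, if A(ab) : ℝ³ → ℝ³ are skew-symmetric linear maps (one for each of the six wedges) such that the fields v(ab) = π_{P(ab)^⊥} ∘ A(ab), restricted to W(ab), form a compatible Jacobi field on T, then there exists one skew-symmetric A : ℝ³ → ℝ³ with π_{P(ab)^⊥}(A(ab)x) = π_{P(ab)^⊥}(Ax) for every x ∈ W(ab) and every pair ab. -/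
/-!
STATEMENT 7: Integrability of the tetrahedral cone: every linear compatible Jacobi field on
`T` is generated by a single rotation.  Precisely, if `A(ab) : ℝ³ → ℝ³` are skew-symmetric
linear maps (one for each of the six wedges) such that the fields
`v(ab) = π_{P(ab)^⊥} ∘ A(ab)`, restricted to `W(ab)`, form a compatible Jacobi field on
`T`, then there exists one skew-symmetric `A : ℝ³ → ℝ³` with
`π_{P(ab)^⊥}(A(ab)x) = π_{P(ab)^⊥}(Ax)` for every `x ∈ W(ab)` and every pair `ab`.
-/
noncomputable section

open Real MeasureTheory Metric
open scoped RealInnerProductSpace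

/-- The plane `P(ab) = span(p_a, p_b)`. -/
def Pl (a b : Fin 4) : Submodule ℝ E3 := Submodule.span ℝ {tp a, tp b}

/-- A linear map `A : ℝ³ → ℝ³` is skew-symmetric if `⟪Ax, y⟫ = −⟪x, Ay⟫` for all `x, y`. -/
def IsSkew (A : E3 →ₗ[ℝ] E3) : Prop := ∀ x y : E3, ⟪A x, y⟫ = -⟪x, A y⟫

/-- The Laplacian of `f` along the plane `P(ab)`, computed (within the set `s`) using the
orthonormal basis `(tp a, tang a b)` of `P(ab)`. -/
def lapT (a b : Fin 4) (f : E3 → E3) (s : Set E3) (x : E3) : E3 :=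
  lineDerivWithin ℝ (fun y => lineDerivWithin ℝ f s y (tp a)) s x (tp a)
  + lineDerivWithin ℝ (fun y => lineDerivWithin ℝ f s y (tang a b)) s x (tang a b)

/-- A compatible Jacobi field on the tetrahedral cone `T`: a collection of functions
`v(ab) : W(ab) → P(ab)^⊥` (the two orders `ab`, `ba` agreeing on the wedge) such that
(A) each `v(ab)` is smooth on `W(ab) ∖ {0}` (up to the boundary rays) and harmonic there,
(B) along each punctured junction ray `L(a) ∖ {0}` there is a single vector `V(z) ∈ ℝ³`
with `v(ab)(z) = π_{P(ab)^⊥}(V(z))` for all `b ≠ a`, and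
(C) the conormal derivatives of the three wedges meeting at `L(a)` sum to zero. -/
def IsCompatibleJacobiT (v : Fin 4 → Fin 4 → E3 → E3) : Prop :=
  (∀ a b, ∀ x ∈ Wdg a b, v a b x = v b a x) ∧
  (∀ a b, a ≠ b → ∀ x ∈ Wdg a b, v a b x ∈ (Pl a b)ᗮ) ∧
  (∀ a b, a ≠ b → ContDiffOn ℝ (⊤ : ℕ∞) (v a b) (Wdg a b \ {0})) ∧
  (∀ a b, a ≠ b → ∀ x ∈ Wdg a b \ {0}, lapT a b (v a b) (Wdg a b) x = 0) ∧
  (∀ a : Fin 4, ∀ z ∈ ray a \ {0}, ∃ V : E3, ∀ b, b ≠ a →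
      v a b z = (Submodule.orthogonalProjectionOnto (Pl a b)ᗮ V : E3)) ∧
  (∀ a : Fin 4, ∀ z ∈ ray a \ {0},
      ∑ b ∈ Finset.univ.erase a,
        lineDerivWithin ℝ (v a b) (Wdg a b) z (conormal a b) = 0)

/-- Homogeneity of degree one: `v(ab)(λ z) = λ v(ab)(z)` for `λ > 0`, `z ∈ W(ab)`. -/
def IsHomogeneousOneT (v : Fin 4 → Fin 4 → E3 → E3) : Prop :=
  ∀ a b, a ≠ b → ∀ x ∈ Wdg a b, ∀ lam : ℝ, 0 < lam → v a b (lam • x) = lam • v a b x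


/-! ### Auxiliary machinery -/

section Aux

lemma inner3 (x y : E3) : ⟪x, y⟫ = x 0 * y 0 + x 1 * y 1 + x 2 * y 2 := by
  simp [PiLp.inner_apply, Fin.sum_univ_three, RCLike.inner_apply, mul_comm]

lemma ext3 {x y : E3} (h0 : x 0 = y 0) (h1 : x 1 = y 1) (h2 : x 2 = y 2) : x = y := by
  ext i; fin_cases i <;> assumption

/-- Cross product on `E3`. -/
def cross3 (u v : E3) : E3 := (EuclideanSpace.equiv (Fin 3) ℝ).symm
  ![u 1 * v 2 - u 2 * v 1, u 2 * v 0 - u 0 * v 2, u 0 * v 1 - u 1 * v 0]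

@[simp] lemma cross3_0 (u v : E3) : cross3 u v 0 = u 1 * v 2 - u 2 * v 1 := rfl
@[simp] lemma cross3_1 (u v : E3) : cross3 u v 1 = u 2 * v 0 - u 0 * v 2 := rfl
@[simp] lemma cross3_2 (u v : E3) : cross3 u v 2 = u 0 * v 1 - u 1 * v 0 := rfl
@[simp] lemma sm0 (c : ℝ) (x : E3) (i : Fin 3) : (c • x) i = c * x i := rfl
@[simp] lemma ad0 (x y : E3) (i : Fin 3) : (x + y) i = x i + y i := rfl
@[simp] lemma sub0 (x y : E3) (i : Fin 3) : (x - y) i = x i - y i := rfl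
@[simp] lemma neg0 (x : E3) (i : Fin 3) : (-x) i = -(x i) := rfl
@[simp] lemma zero0 (i : Fin 3) : (0 : E3) i = 0 := rfl

lemma cross3_self (x : E3) : cross3 x x = 0 := by apply ext3 <;> simp <;> ring
lemma cross3_anticomm (x y : E3) : cross3 y x = -cross3 x y := by apply ext3 <;> simp <;> ring

/-- `cross3 u` as a linear map in the second variable. -/
def crossL (u : E3) : E3 →ₗ[ℝ] E3 where
  toFun := cross3 u
  map_add' x y := by apply ext3 <;> simp <;> ring
  map_smul' c x := by apply ext3 <;> simp <;> ring

lemma crossL_apply (u v : E3) : crossL u v = cross3 u v := rfl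

lemma tri (x y z : E3) : ⟪cross3 x y, z⟫ = ⟪cross3 y z, x⟫ := by
  simp only [inner3, cross3_0, cross3_1, cross3_2]; ring

lemma dotcross (x y z w : E3) :
    ⟪cross3 x y, cross3 z w⟫ = ⟪x,z⟫ * ⟪y,w⟫ - ⟪x,w⟫ * ⟪y,z⟫ := by
  simp only [inner3, cross3_0, cross3_1, cross3_2]; ring

lemma inner_cross_left (x y : E3) : ⟪cross3 x y, x⟫ = 0 := by
  simp only [inner3, cross3_0, cross3_1, cross3_2]; ring

lemma inner_cross_right (x y : E3) : ⟪cross3 x y, y⟫ = 0 := by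
  simp only [inner3, cross3_0, cross3_1, cross3_2]; ring

lemma crosscross1 (x y : E3) : cross3 x (cross3 x y) = ⟪x,y⟫ • x - ⟪x,x⟫ • y := by
  apply ext3 <;> simp only [inner3, cross3_0, cross3_1, cross3_2, sm0, sub0] <;> ring

lemma crosscross2 (x y : E3) : cross3 y (cross3 x y) = ⟪y,y⟫ • x - ⟪x,y⟫ • y := by
  apply ext3 <;> simp only [inner3, cross3_0, cross3_1, cross3_2, sm0, sub0] <;> ring

lemma cross_skew (u x y : E3) : ⟪cross3 u x, y⟫ = -⟪x, cross3 u y⟫ := by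
  simp only [inner3, cross3_0, cross3_1, cross3_2]; ring

lemma onb_decomp (u v x : E3) (hu : ⟪u,u⟫ = 1) (hv : ⟪v,v⟫ = 1) (huv : ⟪u,v⟫ = 0) :
    x = ⟪u,x⟫ • u + ⟪v,x⟫ • v + ⟪cross3 u v, x⟫ • cross3 u v := by
  rw [inner3] at hu hv huv
  apply ext3
  · simp only [inner3, cross3_0, cross3_1, cross3_2, sm0, ad0]
    linear_combination ((v 0*x 0+v 1*x 1+v 2*x 2)*(v 0) - (v 0*v 0+v 1*v 1+v 2*v 2)*(x 0))*hu + ((u 0*x 0+u 1*x 1+u 2*x 2)*(u 0) - x 0)*hv + ((u 0*v 0+u 1*v 1+u 2*v 2)*(x 0) - (v 0*x 0+v 1*x 1+v 2*x 2)*(u 0) - (u 0*x 0+u 1*x 1+u 2*x 2)*(v 0))*huv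
  · simp only [inner3, cross3_0, cross3_1, cross3_2, sm0, ad0]
    linear_combination ((v 0*x 0+v 1*x 1+v 2*x 2)*(v 1) - (v 0*v 0+v 1*v 1+v 2*v 2)*(x 1))*hu + ((u 0*x 0+u 1*x 1+u 2*x 2)*(u 1) - x 1)*hv + ((u 0*v 0+u 1*v 1+u 2*v 2)*(x 1) - (v 0*x 0+v 1*x 1+v 2*x 2)*(u 1) - (u 0*x 0+u 1*x 1+u 2*x 2)*(v 1))*huv
  · simp only [inner3, cross3_0, cross3_1, cross3_2, sm0, ad0]
    linear_combination ((v 0*x 0+v 1*x 1+v 2*x 2)*(v 2) - (v 0*v 0+v 1*v 1+v 2*v 2)*(x 2))*hu + ((u 0*x 0+u 1*x 1+u 2*x 2)*(u 2) - x 2)*hv + ((u 0*v 0+u 1*v 1+u 2*v 2)*(x 2) - (v 0*x 0+v 1*x 1+v 2*x 2)*(u 2) - (u 0*x 0+u 1*x 1+u 2*x 2)*(v 2))*huv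
lemma tpdot (a b : Fin 4) : ⟪tp a, tp b⟫ = if a = b then 1 else -1/3 := by
  have h2 : Real.sqrt 2 * Real.sqrt 2 = 2 := Real.mul_self_sqrt (by norm_num)
  have h6 : Real.sqrt 6 * Real.sqrt 6 = 6 := Real.mul_self_sqrt (by norm_num)
  fin_cases a <;> fin_cases b <;>
    · simp only [inner3, tp]
      norm_num [Fin.ext_iff, Matrix.cons_val_two]
      try nlinarith [h2, h6]

lemma tpsum : tp 0 + tp 1 + tp 2 + tp 3 = 0 := by
  apply ext3 <;> simp [tp] <;> ring

lemma tp_ne (a : Fin 4) : tp a ≠ 0 := by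
  intro h
  have := tpdot a a
  rw [h] at this
  simp at this

lemma sqrt2_pos : (0:ℝ) < Real.sqrt 2 := Real.sqrt_pos.2 (by norm_num)
lemma s2s2 : Real.sqrt 2 * Real.sqrt 2 = 2 := Real.mul_self_sqrt (by norm_num)

/-- Unit normal of the plane `Pl a b`. -/
def nuv (a b : Fin 4) : E3 := cross3 (tp a) (tang a b)

lemma nuv_eq (a b : Fin 4) : nuv a b = (3 * (2*Real.sqrt 2)⁻¹) • cross3 (tp a) (tp b) := by
  apply ext3 <;>
    simp only [nuv, tang, cross3_0, cross3_1, cross3_2, sm0, ad0] <;> ring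

lemma nuv_aa (a : Fin 4) : nuv a a = 0 := by
  rw [nuv_eq, cross3_self, smul_zero]

lemma nuv_swap (a b : Fin 4) : nuv b a = -nuv a b := by
  rw [nuv_eq, nuv_eq, cross3_anticomm, smul_neg]

lemma utang {a b : Fin 4} (hab : a ≠ b) : ⟪tp a, tang a b⟫ = 0 := by
  rw [tang, real_inner_smul_right, inner_add_right, real_inner_smul_right, tpdot, tpdot]
  simp [hab]
  norm_num

lemma tangtang {a b : Fin 4} (hab : a ≠ b) : ⟪tang a b, tang a b⟫ = 1 := by
  rw [tang, real_inner_smul_right, real_inner_smul_left, inner_add_right, inner_add_left,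
    inner_add_left, real_inner_smul_right, real_inner_smul_right, real_inner_smul_left,
    real_inner_smul_left, tpdot, tpdot, tpdot, tpdot]
  simp only [hab, hab.symm, if_false, if_true, if_pos rfl]
  have h := s2s2
  field_simp
  nlinarith [h]

lemma nuv_dot_self {a b : Fin 4} (hab : a ≠ b) : ⟪nuv a b, nuv a b⟫ = 1 := by
  rw [nuv_eq, real_inner_smul_left, real_inner_smul_right, dotcross,
    tpdot, tpdot, tpdot, tpdot, if_pos rfl, if_pos rfl, if_neg hab, if_neg hab.symm]
  have h := s2s2
  field_simp
  nlinarith [h]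

lemma nuv_dot_ne {a b c : Fin 4} (hab : a ≠ b) (hac : a ≠ c) (hbc : b ≠ c) :
    ⟪nuv a b, nuv a c⟫ = -(1/2) := by
  rw [nuv_eq, nuv_eq, real_inner_smul_left, real_inner_smul_right, dotcross,
    tpdot, tpdot, tpdot, tpdot, if_pos rfl, if_neg hbc, if_neg hac, if_neg hab.symm]
  have h := s2s2
  field_simp
  nlinarith [h]

lemma nuv_perp_a (a b : Fin 4) : ⟪nuv a b, tp a⟫ = 0 := inner_cross_left _ _

lemma nuv_perp_b (a b : Fin 4) : ⟪nuv a b, tp b⟫ = 0 := by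
  rw [nuv_eq, real_inner_smul_left, inner_cross_right, mul_zero]

lemma nuv_perp_tang (a b : Fin 4) : ⟪nuv a b, tang a b⟫ = 0 := inner_cross_right _ _

lemma nuv_sum (a : Fin 4) : nuv a 0 + nuv a 1 + nuv a 2 + nuv a 3 = 0 := by
  rw [nuv_eq, nuv_eq, nuv_eq, nuv_eq, ← smul_add, ← smul_add, ← smul_add,
    ← crossL_apply, ← crossL_apply, ← crossL_apply, ← crossL_apply,
    ← map_add, ← map_add, ← map_add, tpsum, map_zero, smul_zero]

lemma mem_Pl_a (a b : Fin 4) : tp a ∈ Pl a b :=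
  Submodule.subset_span (by simp)

lemma mem_Pl_b (a b : Fin 4) : tp b ∈ Pl a b :=
  Submodule.subset_span (by simp)

lemma tang_mem_Pl (a b : Fin 4) : tang a b ∈ Pl a b := by
  rw [tang]
  exact Submodule.smul_mem _ _
    (Submodule.add_mem _ (mem_Pl_a a b) (Submodule.smul_mem _ _ (mem_Pl_b a b)))

lemma proj_formula_s7 {a b : Fin 4} (hab : a ≠ b) (x : E3) :
    (Submodule.orthogonalProjectionOnto (Pl a b)ᗮ x : E3) = ⟪nuv a b, x⟫ • nuv a b := by
  have huu : ⟪tp a, tp a⟫ = 1 := by rw [tpdot]; simp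
  apply Submodule.eq_starProjection_of_mem_orthogonal'
    (z := ⟪tp a, x⟫ • tp a + ⟪tang a b, x⟫ • tang a b)
  · rw [Submodule.mem_orthogonal]
    intro u hu
    rcases Submodule.mem_span_pair.1 hu with ⟨m, n, rfl⟩
    rw [inner_add_left, real_inner_smul_left, real_inner_smul_left, real_inner_smul_right,
      real_inner_smul_right, real_inner_comm (nuv a b) (tp a), real_inner_comm (nuv a b) (tp b),
      nuv_perp_a, nuv_perp_b]
    ring
  · exact Submodule.le_orthogonal_orthogonal _
      (Submodule.add_mem _ (Submodule.smul_mem _ _ (mem_Pl_a a b))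
        (Submodule.smul_mem _ _ (tang_mem_Pl a b)))
  · have hd := onb_decomp (tp a) (tang a b) x huu (tangtang hab) (utang hab)
    rw [← nuv] at hd
    nth_rewrite 1 [hd]
    abel

lemma mem_Wdg {a b : Fin 4} {s t : ℝ} (hs : 0 ≤ s) (ht : 0 ≤ t) :
    s • tp a + t • tp b ∈ Wdg a b := ⟨s, t, hs, ht, rfl⟩

lemma tpb_mem_Wdg (a b : Fin 4) : tp b ∈ Wdg a b :=
  ⟨0, 1, le_rfl, zero_le_one, by simp⟩

lemma tpa_mem_Wdg (a b : Fin 4) : tp a ∈ Wdg a b :=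
  ⟨1, 0, zero_le_one, le_rfl, by simp⟩

lemma tpa_mem_ray (a : Fin 4) : tp a ∈ ray a \ {0} :=
  ⟨⟨1, zero_le_one, (one_smul ℝ _).symm⟩, by simp [tp_ne a]⟩

lemma lineDeriv_wedge {a b : Fin 4} (hab : a ≠ b) (f : E3 →ₗ[ℝ] E3) :
    lineDerivWithin ℝ (f : E3 → E3) (Wdg a b) (tp a) (conormal a b) = f (conormal a b) := by
  have hIic : Set.Iic (0:ℝ) ⊆ (fun t : ℝ => tp a + t • conormal a b) ⁻¹' (Wdg a b) := by
    intro t ht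
    have hc : (0:ℝ) < (2*Real.sqrt 2)⁻¹ := by positivity
    refine ⟨1 - t*(2*Real.sqrt 2)⁻¹, -(3*t*(2*Real.sqrt 2)⁻¹), by nlinarith [Set.mem_Iic.1 ht], by nlinarith [Set.mem_Iic.1 ht], ?_⟩
    apply ext3 <;> simp only [conormal, tang, sm0, ad0, neg0] <;> ring
  have hkey : (fun t : ℝ => f (tp a + t • conormal a b))
      = fun t => f (tp a) + t • f (conormal a b) := funext fun t => by
    rw [f.map_add, f.map_smul]
  have hd : HasDerivWithinAt (fun t : ℝ => f (tp a + t • conormal a b)) (f (conormal a b))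
      ((fun t : ℝ => tp a + t • conormal a b) ⁻¹' (Wdg a b)) 0 := by
    rw [hkey]
    have h1 : HasDerivAt (fun t : ℝ => f (tp a) + t • f (conormal a b)) (f (conormal a b)) 0 := by
      simpa using ((hasDerivAt_id (0:ℝ)).smul_const (f (conormal a b))).const_add (f (tp a))
    exact h1.hasDerivWithinAt
  have hu : UniqueDiffWithinAt ℝ ((fun t : ℝ => tp a + t • conormal a b) ⁻¹' (Wdg a b)) 0 :=
    (uniqueDiffOn_Iic (0:ℝ) 0 Set.self_mem_Iic).mono hIic
  exact hd.derivWithin hu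

/-- The normal component of a linear field on the wedge `ab`, as a linear map. -/
def projA (a b : Fin 4) (T : E3 →ₗ[ℝ] E3) : E3 →ₗ[ℝ] E3 where
  toFun := fun x => ⟪nuv a b, T x⟫ • nuv a b
  map_add' x y := by simp only [_root_.map_add, inner_add_right, add_smul]
  map_smul' c x := by
    simp only [_root_.map_smul, real_inner_smul_right, RingHom.id_apply, mul_smul]

lemma projA_apply (a b : Fin 4) (T : E3 →ₗ[ℝ] E3) (x : E3) :
    projA a b T x = ⟪nuv a b, T x⟫ • nuv a b := rfl

end Aux

/-- Integrability of the tetrahedral cone. -/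
theorem tetrahedral_cone_integrable
    (A : Fin 4 → Fin 4 → (E3 →ₗ[ℝ] E3))
    (hskew : ∀ a b, IsSkew (A a b))
    (hjac : IsCompatibleJacobiT
      (fun a b x => (Submodule.orthogonalProjectionOnto (Pl a b)ᗮ (A a b x) : E3))) :
    ∃ A' : E3 →ₗ[ℝ] E3, IsSkew A' ∧
      ∀ a b, a ≠ b → ∀ x ∈ Wdg a b,
        (Submodule.orthogonalProjectionOnto (Pl a b)ᗮ (A a b x) : E3)
          = (Submodule.orthogonalProjectionOnto (Pl a b)ᗮ (A' x) : E3) := by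
  obtain ⟨hsymm, hperp, hsmooth, hlap, hB, hC⟩ := hjac
  set M : Fin 4 → Fin 4 → ℝ := fun a b => ⟪nuv a b, A a b (tp a)⟫ with hMdef
  have hMaa : ∀ a, M a a = 0 := fun a => by simp [hMdef, nuv_aa]
  -- symmetry of the two orders of a wedge
  have hsym : ∀ a b : Fin 4, a ≠ b → ⟪nuv a b, A a b (tp b)⟫ = - M b a := by
    intro a b hab
    have h := hsymm a b (tp b) (tpb_mem_Wdg a b)
    simp only at h
    rw [proj_formula_s7 hab, proj_formula_s7 hab.symm] at h
    have h2 : ⟪nuv a b, ⟪nuv a b, A a b (tp b)⟫ • nuv a b⟫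
        = ⟪nuv a b, ⟪nuv b a, A b a (tp b)⟫ • nuv b a⟫ := by rw [h]
    rw [real_inner_smul_right, real_inner_smul_right, nuv_dot_self hab, nuv_swap a b,
      inner_neg_right, inner_neg_left, nuv_dot_self hab] at h2
    simp only [hMdef]
    rw [nuv_swap a b, inner_neg_left]
    linarith
  -- condition (B): row sums vanish
  have hBrow : ∀ a : Fin 4, M a 0 + M a 1 + M a 2 + M a 3 = 0 := by
    intro a
    obtain ⟨V, hV⟩ := hB a (tp a) (tpa_mem_ray a)
    have key : ∀ b, M a b = ⟪nuv a b, V⟫ := by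
      intro b
      by_cases hba : b = a
      · subst hba; simp [hMdef, nuv_aa]
      · have h := hV b hba
        simp only at h
        rw [proj_formula_s7 (Ne.symm hba), proj_formula_s7 (Ne.symm hba)] at h
        have h2 : ⟪nuv a b, ⟪nuv a b, A a b (tp a)⟫ • nuv a b⟫
            = ⟪nuv a b, ⟪nuv a b, V⟫ • nuv a b⟫ := by rw [h]
        rw [real_inner_smul_right, real_inner_smul_right, nuv_dot_self (Ne.symm hba)] at h2
        simp only [hMdef]
        linarith
    rw [key 0, key 1, key 2, key 3, ← inner_add_left, ← inner_add_left, ← inner_add_left,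
      nuv_sum a, inner_zero_left]
  -- condition (C): weighted normal sums vanish
  have c_ne : (-(2*Real.sqrt 2)⁻¹ : ℝ) ≠ 0 := by
    have := sqrt2_pos
    intro h
    rw [neg_eq_zero, inv_eq_zero] at h
    linarith
  have hCrow : ∀ a : Fin 4,
      (M a 0 - 3*M 0 a) • nuv a 0 + (M a 1 - 3*M 1 a) • nuv a 1
      + (M a 2 - 3*M 2 a) • nuv a 2 + (M a 3 - 3*M 3 a) • nuv a 3 = 0 := by
    intro a
    have h := hC a (tp a) (tpa_mem_ray a)
    have hterm : ∀ b ∈ Finset.univ.erase a,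
        lineDerivWithin ℝ (fun x => (Submodule.orthogonalProjectionOnto (Pl a b)ᗮ (A a b x) : E3))
          (Wdg a b) (tp a) (conormal a b)
        = (-(2*Real.sqrt 2)⁻¹) • ((M a b - 3 * M b a) • nuv a b) := by
      intro b hb
      have hba : b ≠ a := Finset.ne_of_mem_erase hb
      have hab : a ≠ b := Ne.symm hba
      have hfun : (fun x => (Submodule.orthogonalProjectionOnto (Pl a b)ᗮ (A a b x) : E3))
          = ⇑(projA a b (A a b)) :=
        funext fun x => by rw [proj_formula_s7 hab]; rfl
      rw [hfun, lineDeriv_wedge hab (projA a b (A a b)), projA_apply]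
      have hcon : conormal a b = (-(2*Real.sqrt 2)⁻¹) • (tp a + (3:ℝ) • tp b) := by
        rw [conormal, tang, neg_smul, ← neg_smul]
      have hval : ⟪nuv a b, A a b (conormal a b)⟫
          = (-(2*Real.sqrt 2)⁻¹) * (M a b - 3 * M b a) := by
        rw [hcon, _root_.map_smul, real_inner_smul_right, _root_.map_add, inner_add_right,
          _root_.map_smul, real_inner_smul_right, hsym a b hab]
        have hM1 : ⟪nuv a b, A a b (tp a)⟫ = M a b := by simp only [hMdef]
        rw [hM1]; ring
      rw [hval, mul_smul]
    rw [Finset.sum_congr rfl hterm, ← Finset.smul_sum] at h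
    have h2 : ∑ b ∈ Finset.univ.erase a, (M a b - 3*M b a) • nuv a b = 0 :=
      (smul_eq_zero.1 h).resolve_left c_ne
    have h3 : ∑ b ∈ Finset.univ, (fun b => (M a b - 3*M b a) • nuv a b) b = 0 := by
      rw [← Finset.sum_erase_add _ _ (Finset.mem_univ a), h2, zero_add]
      simp [nuv_aa]
    simpa [Fin.sum_univ_four] using h3
  -- the three weights at a junction agree
  have helper3 : ∀ (w1 w2 w3 : E3) (r1 r2 r3 : ℝ),
      r1 • w1 + r2 • w2 + r3 • w3 = 0 →
      ⟪w1,w1⟫ = 1 → ⟪w2,w2⟫ = 1 → ⟪w3,w3⟫ = 1 →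
      ⟪w1,w2⟫ = -(1/2) → ⟪w1,w3⟫ = -(1/2) → ⟪w2,w3⟫ = -(1/2) →
      r1 = r2 ∧ r1 = r3 := by
    intro w1 w2 w3 r1 r2 r3 h h11 h22 h33 h12 h13 h23
    have h21 : ⟪w2,w1⟫ = -(1/2) := by rw [real_inner_comm]; exact h12
    have h31 : ⟪w3,w1⟫ = -(1/2) := by rw [real_inner_comm]; exact h13
    have h32 : ⟪w3,w2⟫ = -(1/2) := by rw [real_inner_comm]; exact h23
    have e1 : ⟪r1 • w1 + r2 • w2 + r3 • w3, w1⟫ = 0 := by rw [h, inner_zero_left]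
    have e2 : ⟪r1 • w1 + r2 • w2 + r3 • w3, w2⟫ = 0 := by rw [h, inner_zero_left]
    have e3 : ⟪r1 • w1 + r2 • w2 + r3 • w3, w3⟫ = 0 := by rw [h, inner_zero_left]
    rw [inner_add_left, inner_add_left, real_inner_smul_left, real_inner_smul_left,
      real_inner_smul_left, h11, h21, h31] at e1
    rw [inner_add_left, inner_add_left, real_inner_smul_left, real_inner_smul_left,
      real_inner_smul_left, h12, h22, h32] at e2
    rw [inner_add_left, inner_add_left, real_inner_smul_left, real_inner_smul_left,
      real_inner_smul_left, h13, h23, h33] at e3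
    constructor <;> linarith
  have d01 : (0:Fin 4) ≠ 1 := by decide
  have d02 : (0:Fin 4) ≠ 2 := by decide
  have d03 : (0:Fin 4) ≠ 3 := by decide
  have d12 : (1:Fin 4) ≠ 2 := by decide
  have d13 : (1:Fin 4) ≠ 3 := by decide
  have d23 : (2:Fin 4) ≠ 3 := by decide
  have hQ0 := helper3 (nuv 0 1) (nuv 0 2) (nuv 0 3) _ _ _
    (by simpa [nuv_aa] using hCrow 0)
    (nuv_dot_self d01) (nuv_dot_self d02) (nuv_dot_self d03)
    (nuv_dot_ne d01 d02 d12) (nuv_dot_ne d01 d03 d13) (nuv_dot_ne d02 d03 d23)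
  have hQ1 := helper3 (nuv 1 0) (nuv 1 2) (nuv 1 3) _ _ _
    (by simpa [nuv_aa] using hCrow 1)
    (nuv_dot_self d01.symm) (nuv_dot_self d12) (nuv_dot_self d13)
    (nuv_dot_ne d01.symm d12 d02) (nuv_dot_ne d01.symm d13 d03) (nuv_dot_ne d12 d13 d23)
  have hQ2 := helper3 (nuv 2 0) (nuv 2 1) (nuv 2 3) _ _ _
    (by simpa [nuv_aa] using hCrow 2)
    (nuv_dot_self d02.symm) (nuv_dot_self d12.symm) (nuv_dot_self d23)
    (nuv_dot_ne d02.symm d12.symm d01) (nuv_dot_ne d02.symm d23 d03)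
    (nuv_dot_ne d12.symm d23 d13)
  have hQ3 := helper3 (nuv 3 0) (nuv 3 1) (nuv 3 2) _ _ _
    (by simpa [nuv_aa] using hCrow 3)
    (nuv_dot_self d03.symm) (nuv_dot_self d13.symm) (nuv_dot_self d23.symm)
    (nuv_dot_ne d03.symm d13.symm d01) (nuv_dot_ne d03.symm d23.symm d02)
    (nuv_dot_ne d13.symm d23.symm d12)
  obtain ⟨q, hqv⟩ : ∃ q : Fin 4 → ℝ, q 0 = M 0 1 - 3*M 1 0 ∧ q 1 = M 1 0 - 3*M 0 1
      ∧ q 2 = M 2 0 - 3*M 0 2 ∧ q 3 = M 3 0 - 3*M 0 3 :=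
    ⟨![M 0 1 - 3*M 1 0, M 1 0 - 3*M 0 1, M 2 0 - 3*M 0 2, M 3 0 - 3*M 0 3],
      rfl, rfl, rfl, rfl⟩
  have hqa : ∀ a b : Fin 4, a ≠ b → M a b - 3 * M b a = q a := by
    intro a b hab
    fin_cases a <;> fin_cases b
    · exact absurd rfl hab
    · exact hqv.1.symm
    · exact hQ0.1.symm.trans hqv.1.symm
    · exact hQ0.2.symm.trans hqv.1.symm
    · exact hqv.2.1.symm
    · exact absurd rfl hab
    · exact hQ1.1.symm.trans hqv.2.1.symm
    · exact hQ1.2.symm.trans hqv.2.1.symm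
    · exact hqv.2.2.1.symm
    · exact hQ2.1.symm.trans hqv.2.2.1.symm
    · exact absurd rfl hab
    · exact hQ2.2.symm.trans hqv.2.2.1.symm
    · exact hqv.2.2.2.symm
    · exact hQ3.1.symm.trans hqv.2.2.2.symm
    · exact hQ3.2.symm.trans hqv.2.2.2.symm
    · exact absurd rfl hab
  have hM : ∀ a b : Fin 4, a ≠ b → M a b = -(q a + 3 * q b)/8 := by
    intro a b hab
    have h1 := hqa a b hab
    have h2 := hqa b a hab.symm
    linarith
  have hqsum : q 0 + q 1 + q 2 + q 3 = 0 := by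
    have hB0 := hBrow 0
    have h00 := hMaa 0
    have e1 := hM 0 1 d01
    have e2 := hM 0 2 d02
    have e3 := hM 0 3 d03
    have f1 := hqa 1 0 d01.symm
    have f2 := hqa 2 0 d02.symm
    have f3 := hqa 3 0 d03.symm
    linarith
  -- the rotation vector
  set ω : E3 := (3 * (8*Real.sqrt 2)⁻¹) • (q 0 • tp 0 + q 1 • tp 1 + q 2 • tp 2 + q 3 • tp 3)
    with hω
  have hinv2 : (Real.sqrt 2)⁻¹ * (Real.sqrt 2)⁻¹ = (2:ℝ)⁻¹ := by
    rw [← mul_inv, s2s2]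
  have tpdS : ∀ a : Fin 4, ⟪tp a, tp a⟫ = 1 := fun a => by rw [tpdot, if_pos rfl]
  have tpdE : ∀ a b : Fin 4, a ≠ b → ⟪tp a, tp b⟫ = -1/3 := fun a b h => by
    rw [tpdot, if_neg h]
  have hω0 : ⟪ω, tp 0⟫ = q 0 * (2*Real.sqrt 2)⁻¹ := by
    rw [hω, real_inner_smul_left, inner_add_left, inner_add_left, inner_add_left,
      real_inner_smul_left, real_inner_smul_left, real_inner_smul_left, real_inner_smul_left,
      tpdS 0, tpdE 1 0 d01.symm, tpdE 2 0 d02.symm, tpdE 3 0 d03.symm]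
    simp only [mul_inv]
    linear_combination (-(8:ℝ)⁻¹*(Real.sqrt 2)⁻¹) * hqsum
  have hω1 : ⟪ω, tp 1⟫ = q 1 * (2*Real.sqrt 2)⁻¹ := by
    rw [hω, real_inner_smul_left, inner_add_left, inner_add_left, inner_add_left,
      real_inner_smul_left, real_inner_smul_left, real_inner_smul_left, real_inner_smul_left,
      tpdS 1, tpdE 0 1 d01, tpdE 2 1 d12.symm, tpdE 3 1 d13.symm]
    simp only [mul_inv]
    linear_combination (-(8:ℝ)⁻¹*(Real.sqrt 2)⁻¹) * hqsum
  have hω2 : ⟪ω, tp 2⟫ = q 2 * (2*Real.sqrt 2)⁻¹ := by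
    rw [hω, real_inner_smul_left, inner_add_left, inner_add_left, inner_add_left,
      real_inner_smul_left, real_inner_smul_left, real_inner_smul_left, real_inner_smul_left,
      tpdS 2, tpdE 0 2 d02, tpdE 1 2 d12, tpdE 3 2 d23.symm]
    simp only [mul_inv]
    linear_combination (-(8:ℝ)⁻¹*(Real.sqrt 2)⁻¹) * hqsum
  have hω3 : ⟪ω, tp 3⟫ = q 3 * (2*Real.sqrt 2)⁻¹ := by
    rw [hω, real_inner_smul_left, inner_add_left, inner_add_left, inner_add_left,
      real_inner_smul_left, real_inner_smul_left, real_inner_smul_left, real_inner_smul_left,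
      tpdS 3, tpdE 0 3 d03, tpdE 1 3 d13, tpdE 2 3 d23]
    simp only [mul_inv]
    linear_combination (-(8:ℝ)⁻¹*(Real.sqrt 2)⁻¹) * hqsum
  have hωdot : ∀ c : Fin 4, ⟪ω, tp c⟫ = q c * (2*Real.sqrt 2)⁻¹ := by
    intro c
    fin_cases c
    · exact hω0
    · exact hω1
    · exact hω2
    · exact hω3
  refine ⟨crossL ω, fun x y => cross_skew ω x y, ?_⟩
  intro a b hab x hx
  obtain ⟨s, t, hs, ht, rfl⟩ := hx
  rw [proj_formula_s7 hab, proj_formula_s7 hab]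
  -- the two key scalar values
  have huu : ⟪tp a, tp a⟫ = 1 := by rw [tpdot]; simp
  have key1 : ⟪nuv a b, cross3 ω (tp a)⟫ = -((q a + 3*q b)/8) := by
    have hcc : cross3 (tp a) (nuv a b) = -tang a b := by
      rw [nuv, crosscross1, utang hab, huu, zero_smul, one_smul, zero_sub]
    rw [real_inner_comm, tri, hcc, inner_neg_left, tang, real_inner_smul_left,
      inner_add_left, real_inner_smul_left, real_inner_comm ω (tp a),
      real_inner_comm ω (tp b), hωdot a, hωdot b]
    simp only [mul_inv]
    linear_combination (-(q a + 3*q b)/4) * hinv2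
  have key2 : ⟪nuv a b, cross3 ω (tp b)⟫ = (3*q a + q b)/8 := by
    have hth : cross3 (tang a b) (nuv a b) = tp a := by
      rw [nuv, crosscross2, tangtang hab, utang hab, zero_smul, one_smul, sub_zero]
    have hA2 : ⟪nuv a b, cross3 ω (tang a b)⟫ = q a * (2*Real.sqrt 2)⁻¹ := by
      rw [real_inner_comm, tri, hth, real_inner_comm ω (tp a), hωdot a]
    have h3b : (3:ℝ) • tp b = (2*Real.sqrt 2) • tang a b - tp a := by
      rw [tang, smul_smul, mul_inv_cancel₀ (by positivity : (2*Real.sqrt 2:ℝ) ≠ 0), one_smul]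
      abel
    have h3 : (3:ℝ) * ⟪nuv a b, cross3 ω (tp b)⟫
        = 2*Real.sqrt 2 * (q a * (2*Real.sqrt 2)⁻¹) + (q a + 3*q b)/8 := by
      calc (3:ℝ) * ⟪nuv a b, cross3 ω (tp b)⟫
          = ⟪nuv a b, crossL ω ((3:ℝ) • tp b)⟫ := by
            rw [_root_.map_smul, crossL_apply, real_inner_smul_right]
        _ = ⟪nuv a b, crossL ω ((2*Real.sqrt 2) • tang a b - tp a)⟫ := by rw [h3b]
        _ = 2*Real.sqrt 2 * ⟪nuv a b, cross3 ω (tang a b)⟫ - ⟪nuv a b, cross3 ω (tp a)⟫ := by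
            rw [_root_.map_sub, _root_.map_smul, inner_sub_right, real_inner_smul_right]; rfl
        _ = 2*Real.sqrt 2 * (q a * (2*Real.sqrt 2)⁻¹) + (q a + 3*q b)/8 := by
            rw [hA2, key1]; ring
    have hx : 2*Real.sqrt 2 * (q a * (2*Real.sqrt 2)⁻¹) = q a := by
      field_simp
    rw [hx] at h3
    linarith
  congr 1
  simp only [_root_.map_add, _root_.map_smul, inner_add_right, real_inner_smul_right,
    crossL_apply]
  rw [hsym a b hab, key1, key2]
  have hM1 : ⟪nuv a b, A a b (tp a)⟫ = M a b := by simp only [hMdef]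
  rw [hM1]
  have e1 := hM a b hab
  have e2 := hM b a hab.symm
  linear_combination s * e1 - t * e2
end
end

section
/- A positively 1-homogeneous harmonic function on a planar wedge is linear: let 0 < θ₁ − θ₀ ≤ 2π and W = {(r cos θ, r sin θ) : r ≥ 0, θ₀ ≤ θ ≤ θ₁} ⊂ ℝ². If u : W → ℝ is continuous, harmonic on the interior of W, and satisfies u(λx) = λ·u(x) for all λ > 0 and x ∈ W, then there exist a, b ∈ ℝ with u(x₁, x₂) = a·x₁ + b·x₂ for all (x₁, x₂) ∈ W. -/
/-!
STATEMENT 8: A positively 1-homogeneous harmonic function on a planar wedge is linear: let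
`0 < θ₁ − θ₀ ≤ 2π` and `W = {(r cos θ, r sin θ) : r ≥ 0, θ₀ ≤ θ ≤ θ₁} ⊂ ℝ²`.  If
`u : W → ℝ` is continuous, harmonic on the interior of `W` (twice continuously
differentiable with vanishing Laplacian), and satisfies `u(λx) = λ·u(x)` for all `λ > 0`
and `x ∈ W`, then there exist `a, b ∈ ℝ` with `u(x₁, x₂) = a·x₁ + b·x₂` on `W`.
-/

noncomputable section

open Real Set

/-- The planar wedge between angles `θ₀` and `θ₁`. -/
def wedge (θ₀ θ₁ : ℝ) : Set (ℝ × ℝ) :=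
  {z | ∃ r θ : ℝ, 0 ≤ r ∧ θ₀ ≤ θ ∧ θ ≤ θ₁ ∧ z = (r * Real.cos θ, r * Real.sin θ)}

/-- Second partial derivative of `u` within `s` in the direction `v`, via line derivatives. -/
def secondDerivWithin (u : ℝ × ℝ → ℝ) (s : Set (ℝ × ℝ)) (x v : ℝ × ℝ) : ℝ :=
  lineDerivWithin ℝ (fun y => lineDerivWithin ℝ u s y v) s x v

set_option maxHeartbeats 1000000

/-- decompose a continuous linear map on `ℝ × ℝ` through the standard basis. -/
lemma clm_decomp {F : Type*} [NormedAddCommGroup F] [NormedSpace ℝ F]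
    (T : ℝ × ℝ →L[ℝ] F) (w : ℝ × ℝ) :
    T w = w.1 • T (1, 0) + w.2 • T (0, 1) := by
  have hw : w = w.1 • ((1 : ℝ), (0 : ℝ)) + w.2 • ((0 : ℝ), (1 : ℝ)) := by
    ext <;> simp
  conv_lhs => rw [hw]
  rw [map_add, map_smul, map_smul]

/-- a function with vanishing derivative on an open preconnected set is constant there. -/
lemma const_of_fderiv_zero {E F : Type*} [NormedAddCommGroup E] [NormedSpace ℝ E]
    [NormedAddCommGroup F] [NormedSpace ℝ F]
    {s : Set E} (hs : IsOpen s) (hsc : IsPreconnected s) {f : E → F}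
    (hf : ∀ x ∈ s, DifferentiableAt ℝ f x) (h0 : ∀ x ∈ s, fderiv ℝ f x = 0)
    {x y : E} (hx : x ∈ s) (hy : y ∈ s) : f x = f y := by
  have hloc : ∀ z ∈ s, ∀ᶠ w in nhds z, f w = f z := by
    intro z hz
    obtain ⟨ε, hε, hball⟩ := Metric.isOpen_iff.1 hs z hz
    filter_upwards [Metric.ball_mem_nhds z hε] with w hw
    refine (convex_ball z ε).is_const_of_fderivWithin_eq_zero
      (fun p hp => (hf p (hball hp)).differentiableWithinAt) ?_ hw (Metric.mem_ball_self hε)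
    intro p hp
    rw [fderivWithin_of_isOpen Metric.isOpen_ball hp]
    exact h0 p (hball hp)
  by_contra hne
  have hT : IsOpen {w | w ∈ s ∧ f w = f x} := by
    rw [isOpen_iff_mem_nhds]
    rintro w ⟨hws, hwe⟩
    filter_upwards [hs.mem_nhds hws, hloc w hws] with p hp1 hp2
    exact ⟨hp1, hp2.trans hwe⟩
  have hT' : IsOpen {w | w ∈ s ∧ f w ≠ f x} := by
    rw [isOpen_iff_mem_nhds]
    rintro w ⟨hws, hwe⟩
    filter_upwards [hs.mem_nhds hws, hloc w hws] with p hp1 hp2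
    exact ⟨hp1, hp2.symm ▸ hwe⟩
  obtain ⟨p, hps, hp1, hp2⟩ :=
    hsc _ _ hT hT' (fun w hw => by
        by_cases h : f w = f x
        exacts [Or.inl ⟨hw, h⟩, Or.inr ⟨hw, h⟩])
      ⟨x, hx, hx, rfl⟩ ⟨y, hy, hy, fun h => hne h.symm⟩
  exact hp2.2 hp1.2

/-- rotation of the plane by angle `α` is a homeomorphism. -/
def rotH (α : ℝ) : Homeomorph (ℝ × ℝ) (ℝ × ℝ) where
  toFun p := (Real.cos α * p.1 - Real.sin α * p.2, Real.sin α * p.1 + Real.cos α * p.2)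
  invFun p := (Real.cos α * p.1 + Real.sin α * p.2, -Real.sin α * p.1 + Real.cos α * p.2)
  left_inv p := by
    have h := Real.sin_sq_add_cos_sq α
    ext
    · simp only; linear_combination p.1 * h
    · simp only; linear_combination p.2 * h
  right_inv p := by
    have h := Real.sin_sq_add_cos_sq α
    ext
    · simp only; linear_combination p.1 * h
    · simp only; linear_combination p.2 * h
  continuous_toFun := by fun_prop
  continuous_invFun := by fun_prop

/-- the open sector is open. -/
lemma isOpen_sector (θ₀ θ₁ : ℝ) :
    IsOpen ((fun p : ℝ × ℝ => (p.1 * Real.cos p.2, p.1 * Real.sin p.2)) ''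
      (Ioi (0:ℝ) ×ˢ Ioo θ₀ θ₁)) := by
  rw [isOpen_iff_mem_nhds]
  rintro y ⟨⟨r, θ⟩, ⟨hr, hθ₀, hθ₁⟩, rfl⟩
  simp only at hr hθ₀ hθ₁ ⊢
  set a : ℝ := max (θ₀ - θ) (-π) with ha
  set b : ℝ := min (θ₁ - θ) π with hb
  have hπ := Real.pi_pos
  have ha0 : a < 0 := by simp [ha]; constructor <;> linarith
  have hb0 : 0 < b := by simp [hb]; constructor <;> linarith
  have hV : IsOpen ((rotH θ) '' (polarCoord.symm ''
      (Ioi (0:ℝ) ×ˢ Ioo a b))) := by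
    apply (rotH θ).isOpenMap
    apply polarCoord.isOpen_image_symm_of_subset_target
    · exact (isOpen_Ioi).prod isOpen_Ioo
    · rw [polarCoord_target]
      refine prod_mono le_rfl (Ioo_subset_Ioo ?_ ?_)
      · exact le_max_right _ _
      · exact min_le_right _ _
  have hmem : (r * Real.cos θ, r * Real.sin θ) ∈
      (rotH θ) '' (polarCoord.symm '' (Ioi (0:ℝ) ×ˢ Ioo a b)) := by
    refine ⟨polarCoord.symm (r, 0), ⟨(r, 0), ⟨hr, ha0, hb0⟩, rfl⟩, ?_⟩
    rw [polarCoord_symm_apply]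
    simp [rotH, mul_comm]
  filter_upwards [hV.mem_nhds hmem]
  rintro z ⟨w, ⟨⟨r', φ⟩, ⟨hr', hφa, hφb⟩, rfl⟩, rfl⟩
  simp only [mem_Ioi, mem_Ioo] at hr' hφa hφb
  rw [polarCoord_symm_apply]
  refine ⟨(r', φ + θ), ⟨hr', ?_, ?_⟩, ?_⟩
  · show θ₀ < φ + θ
    have : θ₀ - θ ≤ a := le_max_left _ _
    linarith
  · show φ + θ < θ₁
    have : b ≤ θ₁ - θ := min_le_left _ _
    linarith
  · simp only [rotH, Homeomorph.homeomorph_mk_coe, Equiv.coe_fn_mk]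
    rw [Real.cos_add, Real.sin_add]
    ext <;> simp <;> ring

/-- A positively 1-homogeneous harmonic function on a planar wedge is linear. -/
theorem one_homogeneous_harmonic_on_wedge_is_linear
    (θ₀ θ₁ : ℝ) (hlt : 0 < θ₁ - θ₀) (hle : θ₁ - θ₀ ≤ 2 * π)
    (u : ℝ × ℝ → ℝ)
    (hcont : ContinuousOn u (wedge θ₀ θ₁))
    (hC2 : ContDiffOn ℝ 2 u (interior (wedge θ₀ θ₁)))
    (hharm : ∀ x ∈ interior (wedge θ₀ θ₁),
      secondDerivWithin u (interior (wedge θ₀ θ₁)) x (1, 0)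
        + secondDerivWithin u (interior (wedge θ₀ θ₁)) x (0, 1) = 0)
    (hhom : ∀ lam : ℝ, 0 < lam → ∀ x ∈ wedge θ₀ θ₁, u (lam • x) = lam * u x) :
    ∃ a b : ℝ, ∀ x ∈ wedge θ₀ θ₁, u x = a * x.1 + b * x.2 := by
  have h01 : θ₀ < θ₁ := by linarith
  set S : Set (ℝ × ℝ) := interior (wedge θ₀ θ₁) with hS
  set pm : ℝ × ℝ → ℝ × ℝ := fun p => (p.1 * Real.cos p.2, p.1 * Real.sin p.2) with hpm
  set S₀ : Set (ℝ × ℝ) := pm '' (Ioi (0:ℝ) ×ˢ Ioo θ₀ θ₁) with hS₀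
  have hS₀w : S₀ ⊆ wedge θ₀ θ₁ := by
    rintro z ⟨⟨r, θ⟩, ⟨hr, hθ₀, hθ₁⟩, rfl⟩
    exact ⟨r, θ, le_of_lt hr, le_of_lt hθ₀, le_of_lt hθ₁, rfl⟩
  have hS₀o : IsOpen S₀ := isOpen_sector θ₀ θ₁
  have hS₀S : S₀ ⊆ S := interior_maximal hS₀w hS₀o
  have hdiff : ∀ x ∈ S, ContDiffAt ℝ 2 u x :=
    fun x hx => hC2.contDiffAt (isOpen_interior.mem_nhds hx)
  have hd1 : ∀ x ∈ S, DifferentiableAt ℝ u x :=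
    fun x hx => (hdiff x hx).differentiableAt two_ne_zero
  set g : ℝ × ℝ → (ℝ × ℝ →L[ℝ] ℝ) := fderiv ℝ u with hg
  have hgd : ∀ x ∈ S, DifferentiableAt ℝ g x := by
    intro x hx
    exact ((hdiff x hx).fderiv_right (n := 2) (m := 1) (by norm_num)).differentiableAt one_ne_zero
  have hscale : ∀ lam : ℝ, 0 < lam → ∀ x ∈ S₀, lam • x ∈ S₀ := by
    rintro lam hlam z ⟨⟨r, θ⟩, ⟨hr, hθ₀, hθ₁⟩, rfl⟩
    refine ⟨(lam * r, θ), ⟨mul_pos hlam hr, hθ₀, hθ₁⟩, ?_⟩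
    simp [hpm, Prod.smul_mk, smul_eq_mul]; constructor <;> ring
  -- Step 1 : the gradient is 0-homogeneous on S₀
  have hg0 : ∀ x ∈ S₀, ∀ lam : ℝ, 0 < lam → g (lam • x) = g x := by
    intro x hx lam hlam
    have hmem : lam • x ∈ S₀ := hscale lam hlam x hx
    have hDφ : HasFDerivAt (fun y : ℝ × ℝ => u (lam • y))
        ((g (lam • x)).comp (lam • ContinuousLinearMap.id ℝ (ℝ × ℝ))) x := by
      have hlin : HasFDerivAt (fun y : ℝ × ℝ => lam • y)
          (lam • ContinuousLinearMap.id ℝ (ℝ × ℝ)) x := by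
        have := (lam • ContinuousLinearMap.id ℝ (ℝ × ℝ)).hasFDerivAt (x := x)
        exact this
      exact ((hd1 _ (hS₀S hmem)).hasFDerivAt).comp x hlin
    have hDψ : HasFDerivAt (fun y : ℝ × ℝ => lam * u y) (lam • g x) x :=
      ((hd1 x (hS₀S hx)).hasFDerivAt).const_mul lam
    have heq : (fun y : ℝ × ℝ => u (lam • y)) =ᶠ[nhds x] (fun y => lam * u y) := by
      filter_upwards [hS₀o.mem_nhds hx] with y hy
      exact hhom lam hlam y (hS₀w hy)
    have hDφ' : HasFDerivAt (fun y : ℝ × ℝ => u (lam • y)) (lam • g x) x :=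
      hDψ.congr_of_eventuallyEq heq
    have hcomp := hDφ.unique hDφ'
    refine ContinuousLinearMap.ext fun v => ?_
    have := DFunLike.congr_fun hcomp v
    simp only [ContinuousLinearMap.coe_comp', Function.comp_apply,
      ContinuousLinearMap.coe_smul', Pi.smul_apply, ContinuousLinearMap.coe_id', id_eq,
      smul_eq_mul] at this
    have h2 : lam * (g (lam • x)) v = lam * (g x) v := by
      rw [← this]
      rw [map_smul]
      simp [smul_eq_mul]
    exact mul_left_cancel₀ (ne_of_gt hlam) h2
  -- Step 2 : the Hessian annihilates the base point
  have hHx : ∀ x ∈ S₀, (fderiv ℝ g x) x = 0 := by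
    intro x hx
    have hder : HasDerivAt (fun l : ℝ => g (l • x)) ((fderiv ℝ g x) x) 1 := by
      have hl : HasDerivAt (fun l : ℝ => l • x) x 1 := by
        simpa using (hasDerivAt_id (1:ℝ)).smul_const x
      have hgx : HasFDerivAt g (fderiv ℝ g x) ((1:ℝ) • x) := by
        rw [one_smul]; exact (hgd x (hS₀S hx)).hasFDerivAt
      exact hgx.comp_hasDerivAt 1 hl
    have hconst : (fun l : ℝ => g (l • x)) =ᶠ[nhds (1:ℝ)] (fun _ => g x) := by
      filter_upwards [isOpen_Ioi.mem_nhds (mem_Ioi.mpr zero_lt_one)] with l hl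
      exact hg0 x hx l hl
    have hder0 : HasDerivAt (fun l : ℝ => g (l • x)) 0 1 :=
      (hasDerivAt_const (1:ℝ) (g x)).congr_of_eventuallyEq hconst
    exact hder.unique hder0
  -- Step 3 : transfer hharm to fderiv language
  have hsecond : ∀ v : ℝ × ℝ, ∀ x ∈ S, secondDerivWithin u S x v = (fderiv ℝ g x) v v := by
    intro v x hx
    unfold secondDerivWithin
    rw [lineDerivWithin_of_isOpen isOpen_interior hx]
    have heq : (fun y => lineDerivWithin ℝ u S y v) =ᶠ[nhds x] (fun y => (g y) v) := by
      filter_upwards [isOpen_interior.mem_nhds hx] with y hy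
      rw [show lineDerivWithin ℝ u (interior (wedge θ₀ θ₁)) y v = lineDerivWithin ℝ u S y v from rfl,
        lineDerivWithin_of_isOpen isOpen_interior hy, (hd1 y hy).lineDeriv_eq_fderiv]
    rw [heq.lineDeriv_eq]
    have hD : HasFDerivAt (fun y => (g y) v) ((fderiv ℝ g x).flip v) x := by
      have := ((hgd x hx).hasFDerivAt).clm_apply (hasFDerivAt_const v x)
      simpa using this
    rw [hD.differentiableAt.lineDeriv_eq_fderiv, hD.fderiv]
    rfl
  -- Step 4 : the Hessian vanishes on S₀
  have hH0 : ∀ x ∈ S₀, fderiv ℝ g x = 0 := by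
    intro x hx
    set H := fderiv ℝ g x with hHdef
    have hsym : ∀ v w : ℝ × ℝ, H v w = H w v :=
      fun v w => ((hdiff x (hS₀S hx)).isSymmSndFDerivAt (by simp)).eq v w
    have hx2 : 0 < x.1 ^ 2 + x.2 ^ 2 := by
      obtain ⟨⟨r, θ⟩, ⟨hr, _⟩, hxe⟩ := hx
      simp only [mem_Ioi] at hr
      rw [← hxe]
      simp only [hpm]
      have h1 : (r * Real.cos θ) ^ 2 + (r * Real.sin θ) ^ 2 = r ^ 2 := by
        linear_combination (r:ℝ) ^ 2 * Real.sin_sq_add_cos_sq θ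
      rw [h1]
      exact pow_pos hr 2
    set A := H (1, 0) (1, 0) with hA
    set B := H (1, 0) (0, 1) with hB
    set C := H (0, 1) (0, 1) with hC
    have hACsum : A + C = 0 := by
      have := hharm x (hS₀S hx)
      rw [hsecond (1,0) x (hS₀S hx), hsecond (0,1) x (hS₀S hx)] at this
      exact this
    have hrel1 : x.1 * A + x.2 * B = 0 := by
      have h1 : H x (1, 0) = 0 := by rw [hHx x hx]; rfl
      rw [clm_decomp H x] at h1
      simp only [ContinuousLinearMap.add_apply, ContinuousLinearMap.coe_smul',
        Pi.smul_apply, smul_eq_mul] at h1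
      rw [hsym (0,1) (1,0)] at h1
      linarith [h1]
    have hrel2 : x.1 * B + x.2 * C = 0 := by
      have h1 : H x (0, 1) = 0 := by rw [hHx x hx]; rfl
      rw [clm_decomp H x] at h1
      simp only [ContinuousLinearMap.add_apply, ContinuousLinearMap.coe_smul',
        Pi.smul_apply, smul_eq_mul] at h1
      linarith [h1]
    have hA0 : A = 0 := by
      have hAx : A * (x.1 ^ 2 + x.2 ^ 2) = 0 := by
        linear_combination x.1 * hrel1 - x.2 * hrel2 + x.2 ^ 2 * hACsum
      exact (mul_eq_zero.mp hAx).resolve_right (ne_of_gt hx2)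
    have hC0 : C = 0 := by linarith
    have hB0 : B = 0 := by
      have hBx : B * (x.1 ^ 2 + x.2 ^ 2) = 0 := by
        linear_combination x.2 * hrel1 + x.1 * hrel2 - x.1 * x.2 * hACsum
      exact (mul_eq_zero.mp hBx).resolve_right (ne_of_gt hx2)
    refine ContinuousLinearMap.ext fun w => ContinuousLinearMap.ext fun v => ?_
    rw [show (0 : (ℝ × ℝ) →L[ℝ] ((ℝ × ℝ) →L[ℝ] ℝ)) w v = 0 from rfl, clm_decomp H w]
    simp only [ContinuousLinearMap.add_apply, ContinuousLinearMap.coe_smul',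
      Pi.smul_apply, smul_eq_mul]
    rw [clm_decomp (H (1,0)) v, clm_decomp (H (0,1)) v]
    rw [show H (0,1) (1,0) = B from hsym (0,1) (1,0)]
    rw [← hA, ← hB, ← hC, hA0, hB0, hC0]
    simp
  -- Step 5 : the gradient is constant on S₀
  have hS₀conn : IsPreconnected S₀ :=
    (((convex_Ioi (0:ℝ)).prod (convex_Ioo θ₀ θ₁)).isPreconnected).image pm
      (Continuous.continuousOn (by fun_prop))
  have hxstar : pm (1, (θ₀ + θ₁) / 2) ∈ S₀ := by
    exact ⟨(1, (θ₀ + θ₁) / 2), mem_prod.mpr ⟨mem_Ioi.mpr zero_lt_one,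
      mem_Ioo.mpr ⟨by linarith, by linarith⟩⟩, rfl⟩
  set xs := pm (1, (θ₀ + θ₁) / 2) with hxs
  set L : ℝ × ℝ →L[ℝ] ℝ := g xs with hL
  have hgL : ∀ x ∈ S₀, g x = L :=
    fun x hx => const_of_fderiv_zero hS₀o hS₀conn
      (fun z hz => hgd z (hS₀S hz)) hH0 hx hxstar
  -- Step 6 : u is affine, then linear, on S₀
  have huL : ∀ x ∈ S₀, u x = L x := by
    have hh : ∀ x ∈ S₀, u x - L x = u xs - L xs := by
      intro x hx
      refine const_of_fderiv_zero (f := fun y => u y - L y) hS₀o hS₀conn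
        (fun z hz => (hd1 z (hS₀S hz)).sub (L.differentiableAt)) ?_ hx hxstar
      intro z hz
      rw [fderiv_fun_sub (hd1 z (hS₀S hz)) L.differentiableAt, L.fderiv]
      rw [show fderiv ℝ u z = g z from rfl, hgL z hz]
      simp
    have h2xs : (2:ℝ) • xs ∈ S₀ := hscale 2 two_pos xs hxstar
    have hc : u xs - L xs = 0 := by
      have e1 := hh _ h2xs
      have e2 := hhom 2 two_pos xs (hS₀w hxstar)
      rw [e2] at e1
      rw [map_smul] at e1
      simp only [smul_eq_mul] at e1
      linarith
    intro x hx
    have := hh x hx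
    rw [hc] at this
    linarith
  -- Step 7 : extend to the wedge by continuity
  refine ⟨L (1, 0), L (0, 1), ?_⟩
  rintro x hxw
  obtain ⟨r, θ, hr, hθ₀, hθ₁, rfl⟩ := hxw
  have hclos : (r * Real.cos θ, r * Real.sin θ) ∈ closure S₀ := by
    have hmem : ((r, θ) : ℝ × ℝ) ∈ closure (Ioi (0:ℝ) ×ˢ Ioo θ₀ θ₁) := by
      rw [closure_prod_eq, closure_Ioi, closure_Ioo (ne_of_lt h01)]
      exact ⟨hr, hθ₀, hθ₁⟩
    have hcontpm : Continuous pm := by fun_prop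
    exact image_closure_subset_closure_image hcontpm ⟨(r, θ), hmem, rfl⟩
  have hne : (nhdsWithin (r * Real.cos θ, r * Real.sin θ) S₀).NeBot :=
    mem_closure_iff_nhdsWithin_neBot.mp hclos
  have hxw' : (r * Real.cos θ, r * Real.sin θ) ∈ wedge θ₀ θ₁ :=
    ⟨r, θ, hr, hθ₀, hθ₁, rfl⟩
  have t1 : Filter.Tendsto u (nhdsWithin (r * Real.cos θ, r * Real.sin θ) S₀)
      (nhds (u (r * Real.cos θ, r * Real.sin θ))) :=
    (hcont _ hxw').mono hS₀w
  have t2 : Filter.Tendsto u (nhdsWithin (r * Real.cos θ, r * Real.sin θ) S₀)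
      (nhds (L (1, 0) * (r * Real.cos θ) + L (0, 1) * (r * Real.sin θ))) := by
    have hcl : Filter.Tendsto (fun y : ℝ × ℝ => L (1,0) * y.1 + L (0,1) * y.2)
        (nhdsWithin (r * Real.cos θ, r * Real.sin θ) S₀)
        (nhds (L (1, 0) * (r * Real.cos θ) + L (0, 1) * (r * Real.sin θ))) := by
      exact ((Continuous.tendsto (by fun_prop) _).mono_left nhdsWithin_le_nhds)
    refine hcl.congr' ?_
    filter_upwards [self_mem_nhdsWithin] with y hy
    rw [huL y hy, clm_decomp L y]
    simp [smul_eq_mul, mul_comm]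
  exact tendsto_nhds_unique t1 t2
end
end

section
/- Local integrability at a 120° triple junction: let N ≥ 3, let e ∈ ℝ^N be a unit vector, and let n₁, n₂, n₃ be unit vectors orthogonal to e with n_i·n_j = −1/2 for i ≠ j (so n₁ + n₂ + n₃ = 0); set P_j = span(e, n_j). Suppose A(1), A(2), A(3) : ℝ^N → ℝ^N are skew-symmetric linear maps such that: (B) there exists a vector V ∈ ℝ^N with π_{P_j^⊥}(A(j)e) = π_{P_j^⊥}(V) for j = 1, 2, 3, and (C) ∑_{j=1}^{3} π_{P_j^⊥}(A(j)n_j) = 0. Then there exists a single skew-symmetric linear map A : ℝ^N → ℝ^N with π_{P_j^⊥}(A(j)x) = π_{P_j^⊥}(Ax) for all x ∈ P_j and j = 1, 2, 3. -/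
/-!
STATEMENT 15: Local integrability at a 120° triple junction: let `N ≥ 3`, let `e ∈ ℝ^N` be a
unit vector, and `n₁, n₂, n₃` unit vectors orthogonal to `e` with `n_i·n_j = −1/2` for
`i ≠ j`; set `P_j = span(e, n_j)`.  Suppose `A(1), A(2), A(3) : ℝ^N → ℝ^N` are
skew-symmetric with (B) there is `V ∈ ℝ^N` satisfying `π_{P_j^⊥}(A(j)e) = π_{P_j^⊥}(V)`
for `j = 1,2,3`, and (C) `∑_j π_{P_j^⊥}(A(j) n_j) = 0`.  Then there is a single
skew-symmetric `A : ℝ^N → ℝ^N` with `π_{P_j^⊥}(A(j)x) = π_{P_j^⊥}(Ax)` for all `x ∈ P_j`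
and `j = 1,2,3`.
-/

noncomputable section

open scoped RealInnerProductSpace

/-- The elementary skew-symmetric map `x ↦ ⟪v,x⟫ w - ⟪w,x⟫ v`. -/
noncomputable def skmap {E : Type*} [NormedAddCommGroup E] [InnerProductSpace ℝ E]
    (v w : E) : E →ₗ[ℝ] E where
  toFun x := ⟪v, x⟫ • w - ⟪w, x⟫ • v
  map_add' x y := by
    simp only [inner_add_right, add_smul]
    abel
  map_smul' c x := by
    simp only [inner_smul_right, RingHom.id_apply, smul_sub, smul_smul]

lemma skmap_apply {E : Type*} [NormedAddCommGroup E] [InnerProductSpace ℝ E]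
    (v w x : E) : skmap v w x = ⟪v, x⟫ • w - ⟪w, x⟫ • v := rfl

lemma skmap_skew {E : Type*} [NormedAddCommGroup E] [InnerProductSpace ℝ E]
    (v w x y : E) : ⟪skmap v w x, y⟫ = -⟪x, skmap v w y⟫ := by
  simp only [skmap_apply, inner_sub_left, inner_sub_right, inner_smul_left, inner_smul_right,
    RCLike.conj_to_real]
  rw [real_inner_comm x v, real_inner_comm x w]
  ring

theorem local_integrability_at_triple_junction
    (N : ℕ) (hN : 3 ≤ N)
    (e : EuclideanSpace ℝ (Fin N)) (he : ‖e‖ = 1)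
    (n : Fin 3 → EuclideanSpace ℝ (Fin N))
    (hnunit : ∀ j, ‖n j‖ = 1)
    (hne : ∀ j, ⟪n j, e⟫ = 0)
    (hangle : ∀ i j, i ≠ j → ⟪n i, n j⟫ = -1/2)
    (P : Fin 3 → Submodule ℝ (EuclideanSpace ℝ (Fin N)))
    (hP : ∀ j, P j = Submodule.span ℝ {e, n j})
    (A : Fin 3 → (EuclideanSpace ℝ (Fin N) →ₗ[ℝ] EuclideanSpace ℝ (Fin N)))
    (hskew : ∀ j, ∀ x y, ⟪A j x, y⟫ = -⟪x, A j y⟫)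
    (hB : ∃ V : EuclideanSpace ℝ (Fin N), ∀ j,
      (Submodule.orthogonalProjectionOnto (P j)ᗮ (A j e) : EuclideanSpace ℝ (Fin N))
        = (Submodule.orthogonalProjectionOnto (P j)ᗮ V : EuclideanSpace ℝ (Fin N)))
    (hC : ∑ j : Fin 3,
      ((Submodule.orthogonalProjectionOnto (P j)ᗮ (A j (n j)) : (P j)ᗮ) : EuclideanSpace ℝ (Fin N)) = 0) :
    ∃ A' : EuclideanSpace ℝ (Fin N) →ₗ[ℝ] EuclideanSpace ℝ (Fin N),
      (∀ x y, ⟪A' x, y⟫ = -⟪x, A' y⟫) ∧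
      ∀ j, ∀ x ∈ P j,
        (Submodule.orthogonalProjectionOnto (P j)ᗮ (A j x) : EuclideanSpace ℝ (Fin N))
          = (Submodule.orthogonalProjectionOnto (P j)ᗮ (A' x) : EuclideanSpace ℝ (Fin N)) := by
  classical
  obtain ⟨V, hV⟩ := hB
  -- the projected vectors a j
  set a : Fin 3 → EuclideanSpace ℝ (Fin N) := fun j => ((Submodule.orthogonalProjectionOnto (P j)ᗮ (A j (n j)) : (P j)ᗮ) : EuclideanSpace ℝ (Fin N)) with ha
  have ha_mem : ∀ j, a j ∈ (P j)ᗮ := fun j => Submodule.coe_mem _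
  have he_mem : ∀ j, e ∈ P j := by
    intro j; rw [hP j]; exact Submodule.subset_span (by simp)
  have hn_mem : ∀ j, n j ∈ P j := by
    intro j; rw [hP j]; exact Submodule.subset_span (by simp)
  -- basic inner products
  have hee : ⟪e, e⟫ = 1 := by rw [real_inner_self_eq_norm_sq, he]; norm_num
  have hnn : ∀ j, ⟪n j, n j⟫ = 1 := by
    intro j; rw [real_inner_self_eq_norm_sq, hnunit j]; norm_num
  have hen : ∀ j, ⟪e, n j⟫ = 0 := fun j => by rw [real_inner_comm]; exact hne j
  have hea : ∀ j, ⟪e, a j⟫ = 0 := fun j => (ha_mem j) e (he_mem j)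
  have hae : ∀ j, ⟪a j, e⟫ = 0 := fun j => by rw [real_inner_comm]; exact hea j
  have hna : ∀ j, ⟪n j, a j⟫ = 0 := fun j => (ha_mem j) (n j) (hn_mem j)
  have han : ∀ j, ⟪a j, n j⟫ = 0 := fun j => by rw [real_inner_comm]; exact hna j
  -- sum conditions
  have hsum_a : a 0 + a 1 + a 2 = 0 := by
    have := hC
    rwa [Fin.sum_univ_three] at this
  have hsum_n : n 0 + n 1 + n 2 = 0 := by
    have h : ⟪n 0 + n 1 + n 2, n 0 + n 1 + n 2⟫ = 0 := by
      simp only [inner_add_left, inner_add_right, hnn]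
      rw [hangle 0 1 (by decide), hangle 0 2 (by decide), hangle 1 0 (by decide),
        hangle 1 2 (by decide), hangle 2 0 (by decide), hangle 2 1 (by decide)]
      norm_num
    exact inner_self_eq_zero.mp h
  -- the matrix s i j = ⟪n i, a j⟫
  have hrow : ∀ i : Fin 3, ⟪n i, a 0⟫ + ⟪n i, a 1⟫ + ⟪n i, a 2⟫ = 0 := by
    intro i
    have h : ⟪n i, a 0 + a 1 + a 2⟫ = 0 := by rw [hsum_a, inner_zero_right]
    simpa [inner_add_right] using h
  have hcol : ∀ j : Fin 3, ⟪n 0, a j⟫ + ⟪n 1, a j⟫ + ⟪n 2, a j⟫ = 0 := by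
    intro j
    have h : ⟪n 0 + n 1 + n 2, a j⟫ = 0 := by rw [hsum_n, inner_zero_left]
    simpa [inner_add_left] using h
  set σ : ℝ := ⟪n 0, a 1⟫ with hσ
  have s02 : ⟪n 0, a 2⟫ = -σ := by have := hrow 0; have := hna 0; linarith
  have s21 : ⟪n 2, a 1⟫ = -σ := by have := hcol 1; have := hna 1; linarith
  have s20 : ⟪n 2, a 0⟫ = σ := by have := hrow 2; have h := s21; have := hna 2; linarith
  have s10 : ⟪n 1, a 0⟫ = -σ := by have := hcol 0; have h := s20; have := hna 0; linarith
  have s12 : ⟪n 1, a 2⟫ = σ := by have := hrow 1; have h := s10; have := hna 1; linarith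
  -- vector reductions
  have ha2 : a 2 = -a 0 - a 1 := by
    calc a 2 = (a 0 + a 1 + a 2) - a 0 - a 1 := by abel
    _ = -a 0 - a 1 := by rw [hsum_a]; abel
  have hn2 : n 2 = -n 0 - n 1 := by
    calc n 2 = (n 0 + n 1 + n 2) - n 0 - n 1 := by abel
    _ = -n 0 - n 1 := by rw [hsum_n]; abel
  -- the candidate map
  set A' : EuclideanSpace ℝ (Fin N) →ₗ[ℝ] EuclideanSpace ℝ (Fin N) :=
    skmap e V + (2/3 : ℝ) • (skmap (n 0) (a 0) + skmap (n 1) (a 1) + skmap (n 2) (a 2))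
      + (4/3 * σ) • skmap (n 0) (n 1) with hA'
  have hA'skew : ∀ x y, ⟪A' x, y⟫ = -⟪x, A' y⟫ := by
    intro x y
    simp only [hA', LinearMap.add_apply, LinearMap.smul_apply, inner_add_left, inner_add_right,
      inner_smul_left, inner_smul_right, RCLike.conj_to_real, skmap_skew]
    ring
  -- value at e
  have hA'e : A' e = V - ⟪V, e⟫ • e := by
    simp only [hA', LinearMap.add_apply, LinearMap.smul_apply, skmap_apply,
      hee, hne, hae, hen]
    module
  have c10 : ⟪a 1, n 0⟫ = σ := by rw [real_inner_comm]
  have c20 : ⟪a 2, n 0⟫ = -σ := by rw [real_inner_comm]; exact s02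
  have c01 : ⟪a 0, n 1⟫ = -σ := by rw [real_inner_comm]; exact s10
  have c21 : ⟪a 2, n 1⟫ = σ := by rw [real_inner_comm]; exact s12
  have c02 : ⟪a 0, n 2⟫ = σ := by rw [real_inner_comm]; exact s20
  have c12 : ⟪a 1, n 2⟫ = -σ := by rw [real_inner_comm]; exact s21
  -- values at the n j
  have hA'n0 : A' (n 0) = a 0 - ⟪V, n 0⟫ • e := by
    simp only [hA', LinearMap.add_apply, LinearMap.smul_apply, skmap_apply, hen 0,
      hnn 0, han 0, hangle 1 0 (by decide : (1:Fin 3) ≠ 0), hangle 2 0 (by decide : (2:Fin 3) ≠ 0),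
      c10, c20]
    rw [ha2, hn2]
    module
  have hA'n1 : A' (n 1) = a 1 - ⟪V, n 1⟫ • e := by
    simp only [hA', LinearMap.add_apply, LinearMap.smul_apply, skmap_apply, hen 1,
      hnn 1, han 1, hangle 0 1 (by decide : (0:Fin 3) ≠ 1), hangle 2 1 (by decide : (2:Fin 3) ≠ 1),
      c01, c21]
    rw [ha2, hn2]
    module
  have hA'n2 : A' (n 2) = a 2 - ⟪V, n 2⟫ • e := by
    simp only [hA', LinearMap.add_apply, LinearMap.smul_apply, skmap_apply, hen 2,
      hnn 2, han 2, hangle 0 2 (by decide : (0:Fin 3) ≠ 2), hangle 1 2 (by decide : (1:Fin 3) ≠ 2),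
      c02, c12]
    rw [ha2, hn2]
    module
  have hA'n : ∀ j, A' (n j) = a j - ⟪V, n j⟫ • e := by
    intro j; fin_cases j <;> [exact hA'n0; exact hA'n1; exact hA'n2]
  -- projection facts
  have pe0 : ∀ j, Submodule.orthogonalProjectionOnto (P j)ᗮ e = 0 :=
    fun j => Submodule.orthogonalProjectionOnto_apply_of_mem_orthogonal
      (Submodule.le_orthogonal_orthogonal (P j) (he_mem j))
  have key1 : ∀ j, (Submodule.orthogonalProjectionOnto (P j)ᗮ (A j e) : EuclideanSpace ℝ (Fin N))
      = (Submodule.orthogonalProjectionOnto (P j)ᗮ (A' e) : EuclideanSpace ℝ (Fin N)) := by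
    intro j
    rw [hV j, hA'e]
    rw [map_sub, map_smul, pe0 j]
    simp
  have key2 : ∀ j, (Submodule.orthogonalProjectionOnto (P j)ᗮ (A j (n j)) : EuclideanSpace ℝ (Fin N))
      = (Submodule.orthogonalProjectionOnto (P j)ᗮ (A' (n j)) : EuclideanSpace ℝ (Fin N)) := by
    intro j
    rw [hA'n j, map_sub, map_smul, pe0 j]
    have : Submodule.orthogonalProjectionOnto (P j)ᗮ (a j)
        = (Submodule.orthogonalProjectionOnto (P j)ᗮ (A j (n j)) : (P j)ᗮ) := by
      exact Submodule.orthogonalProjectionOnto_mem_subspace_eq_self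
        ((Submodule.orthogonalProjectionOnto (P j)ᗮ (A j (n j)) : (P j)ᗮ))
    rw [this]
    simp [ha]
  refine ⟨A', hA'skew, ?_⟩
  intro j x hx
  rw [hP j] at hx
  obtain ⟨s, t, rfl⟩ := Submodule.mem_span_pair.mp hx
  rw [map_add, map_smul, map_smul, map_add, map_smul, map_smul,
    map_add, map_smul, map_smul, map_add, map_smul, map_smul]
  push_cast
  rw [key1 j, key2 j]
end
end
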